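/- arXiv:1501.06433 — 9 statements merged into one kernel-verified Lean document; each statement's English description precedes it below -/
import Mathlib

section
/- For any α ∈ (0,1) and u ≥ 0, Γ(αu + α)/Γ(αu) = (1/Γ(1−α)) ∫_0^1 (1 − y^u) (1 − y^{1/α})^{−α−1} dy. -/
/-!
Substituting `y = x ^ α` turns the integral into
`∫₀¹ (1 - x ^ (α u)) α x ^ (α - 1) (1 - x) ^ (-α - 1) dx`,
and `α x ^ (α - 1) (1 - x) ^ (-α - 1)` is the derivative of `x ^ α (1 - x) ^ (-α)`.
Integrating by parts, the boundary terms vanish since `1 - x ^ s = O(1 - x)`, which leaves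
`α u · B(α u + α, 1 - α) = α u Γ(α u + α) Γ(1 - α) / Γ(α u + 1)`;
conclude with `Γ(α u + 1) = α u Γ(α u)`.
-/

open Real MeasureTheory Set Filter Topology

theorem integral_rpow_mul_one_sub_rpow_Ioo {p q : ℝ} (hp : 0 < p) (hq : 0 < q) :
    ∫ x in Ioo (0:ℝ) 1, x ^ (p - 1) * (1 - x) ^ (q - 1)
      = Gamma p * Gamma q / Gamma (p + q) := by
  have h := Complex.Gamma_mul_Gamma_eq_betaIntegral (s := (p:ℂ)) (t := (q:ℂ))
    (by simpa using hp) (by simpa using hq)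
  have hcast : Complex.betaIntegral p q
      = ((∫ x in Ioo (0:ℝ) 1, x ^ (p - 1) * (1 - x) ^ (q - 1) : ℝ) : ℂ) := by
    rw [Complex.betaIntegral, intervalIntegral.integral_of_le zero_le_one,
      integral_Ioc_eq_integral_Ioo, ← integral_complex_ofReal]
    refine setIntegral_congr_fun measurableSet_Ioo fun x hx => ?_
    push_cast
    rw [Complex.ofReal_cpow hx.1.le, Complex.ofReal_cpow (by linarith [hx.2])]
    push_cast; rfl
  rw [hcast, ← Complex.ofReal_add, Complex.Gamma_ofReal, Complex.Gamma_ofReal,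
    Complex.Gamma_ofReal, ← Complex.ofReal_mul, ← Complex.ofReal_mul, Complex.ofReal_inj] at h
  rw [h, mul_div_cancel_left₀ _ (Gamma_pos_of_pos (add_pos hp hq)).ne']

theorem integrableOn_rpow_mul_one_sub_rpow_Ioo {p q : ℝ} (hp : 0 < p) (hq : 0 < q) :
    IntegrableOn (fun x => x ^ (p - 1) * (1 - x) ^ (q - 1)) (Ioo (0:ℝ) 1) :=
  Integrable.of_integral_ne_zero <| by
    rw [integral_rpow_mul_one_sub_rpow_Ioo hp hq]
    exact (div_pos (mul_pos (Gamma_pos_of_pos hp) (Gamma_pos_of_pos hq))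
      (Gamma_pos_of_pos (add_pos hp hq))).ne'

theorem integral_comp_rpow_Ioo_zero_one {E : Type*} [NormedAddCommGroup E] [NormedSpace ℝ E]
    (g : ℝ → E) {p : ℝ} (hp : 0 < p) :
    ∫ x in Ioo (0:ℝ) 1, (p * x ^ (p - 1)) • g (x ^ p) = ∫ y in Ioo (0:ℝ) 1, g y := by
  have himage : (· ^ p) '' Ioo (0:ℝ) 1 = Ioo 0 1 := by
    ext y; constructor
    · rintro ⟨x, hx, rfl⟩
      exact ⟨rpow_pos_of_pos hx.1 p, rpow_lt_one hx.1.le hx.2 hp⟩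
    · exact fun hy ↦ ⟨y ^ p⁻¹,
        ⟨rpow_pos_of_pos hy.1 _, rpow_lt_one hy.1.le hy.2 (inv_pos.2 hp)⟩,
        by simp [← rpow_mul hy.1.le, hp.ne']⟩
  have hcov := integral_image_eq_integral_abs_deriv_smul
    (measurableSet_Ioo (a := (0:ℝ)) (b := 1))
    (fun x hx ↦ (hasDerivAt_rpow_const (Or.inl hx.1.ne')).hasDerivWithinAt)
    ((rpow_left_injOn hp.ne').mono fun x hx => hx.1.le) g
  rw [himage] at hcov
  rw [hcov]
  refine setIntegral_congr_fun measurableSet_Ioo fun x hx ↦ ?_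
  rw [abs_of_nonneg (by have := hx.1; positivity)]

theorem one_sub_rpow_le_max_mul {x s : ℝ} (hx₀ : 0 ≤ x) (hx₁ : x ≤ 1) :
    1 - x ^ s ≤ max s 1 * (1 - x) := by
  rcases le_total s 1 with h | h
  · have := self_le_rpow_of_le_one hx₀ hx₁ h
    rw [max_eq_right h]; linarith
  · have := one_add_mul_self_le_rpow_one_add (s := x - 1) (by linarith) h
    rw [add_sub_cancel] at this
    rw [max_eq_left h]; linarith

theorem hasDerivAt_rpow_mul_one_sub_rpow_neg {a x : ℝ} (hx : x ∈ Ioo (0:ℝ) 1) :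
    HasDerivAt (fun x => x ^ a * (1 - x) ^ (-a)) (a * x ^ (a - 1) * (1 - x) ^ (-a - 1)) x := by
  have h1x : 1 - x ≠ 0 := by linarith [hx.2]
  have hd := (hasDerivAt_rpow_const (p := a) (Or.inl hx.1.ne')).mul
    (((hasDerivAt_id x).const_sub 1).rpow_const (p := -a) (Or.inl h1x))
  refine hd.congr_deriv ?_
  have hxa : x ^ a = x ^ (a - 1) * x := by rw [← rpow_add_one hx.1.ne', sub_add_cancel]
  have hya : (1 - x) ^ (-a) = (1 - x) ^ (-a - 1) * (1 - x) := by
    rw [← rpow_add_one h1x, sub_add_cancel]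
  simp only [id, hxa, hya]
  ring

theorem integrableOn_one_sub_rpow_mul_rpow_mul_one_sub_rpow {α s : ℝ} (hα₀ : 0 < α)
    (hα₁ : α < 1) (hs : 0 ≤ s) :
    IntegrableOn (fun x => (1 - x ^ s) * (α * x ^ (α - 1) * (1 - x) ^ (-α - 1)))
      (Ioo (0:ℝ) 1) := by
  refine Integrable.mono'
    ((integrableOn_rpow_mul_one_sub_rpow_Ioo hα₀ (sub_pos.2 hα₁)).const_mul (max s 1 * α)) ?_ ?_
  · exact Measurable.aestronglyMeasurable (by fun_prop)
  · filter_upwards [ae_restrict_mem measurableSet_Ioo] with x hx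
    have h1x : 0 < 1 - x := by linarith [hx.2]
    have hxs : x ^ s ≤ 1 := rpow_le_one hx.1.le hx.2.le hs
    have hya : (1 - x) ^ ((1 - α) - 1) = (1 - x) ^ (-α - 1) * (1 - x) := by
      rw [← rpow_add_one h1x.ne']; ring_nf
    have hG : 0 ≤ α * x ^ (α - 1) * (1 - x) ^ (-α - 1) :=
      mul_nonneg (mul_nonneg hα₀.le (rpow_nonneg hx.1.le _)) (rpow_nonneg h1x.le _)
    rw [Real.norm_of_nonneg (mul_nonneg (by linarith) hG), hya]
    calc (1 - x ^ s) * (α * x ^ (α - 1) * (1 - x) ^ (-α - 1))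
        ≤ (max s 1 * (1 - x)) * (α * x ^ (α - 1) * (1 - x) ^ (-α - 1)) :=
          mul_le_mul_of_nonneg_right (one_sub_rpow_le_max_mul hx.1.le hx.2.le) hG
      _ = _ := by ring

theorem tendsto_one_sub_rpow_mul_rpow_mul_one_sub_rpow_neg_nhdsLT_one {α s : ℝ} (hα₀ : 0 ≤ α)
    (hα₁ : α < 1) (hs : 0 ≤ s) :
    Tendsto (fun x : ℝ => (1 - x ^ s) * (x ^ α * (1 - x) ^ (-α))) (𝓝[<] 1) (𝓝 0) := by
  have hbound : Tendsto (fun x : ℝ => max s 1 * (1 - x) ^ (1 - α)) (𝓝[<] 1) (𝓝 0) := by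
    have hc : Continuous (fun x : ℝ => max s 1 * (1 - x) ^ (1 - α)) :=
      continuous_const.mul ((continuous_const.sub continuous_id).rpow_const
        fun _ => Or.inr (by linarith))
    simpa [zero_rpow (by linarith : (1:ℝ) - α ≠ 0)] using
      (hc.tendsto 1).mono_left nhdsWithin_le_nhds
  have hIoo : Ioo (0:ℝ) 1 ∈ 𝓝[<] 1 := Ioo_mem_nhdsLT zero_lt_one
  refine squeeze_zero' ?_ ?_ hbound
  · filter_upwards [hIoo] with x hx
    have hxs : x ^ s ≤ 1 := rpow_le_one hx.1.le hx.2.le hs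
    exact mul_nonneg (by linarith)
      (mul_nonneg (rpow_nonneg hx.1.le _) (rpow_nonneg (by linarith [hx.2]) _))
  · filter_upwards [hIoo] with x hx
    have h1x : 0 < 1 - x := by linarith [hx.2]
    have hxα : x ^ α ≤ 1 := rpow_le_one hx.1.le hx.2.le hα₀
    have hya : (1 - x) ^ (1 - α) = (1 - x) * (1 - x) ^ (-α) := by
      rw [mul_comm, ← rpow_add_one h1x.ne']; ring_nf
    rw [hya]
    calc (1 - x ^ s) * (x ^ α * (1 - x) ^ (-α))
        ≤ (max s 1 * (1 - x)) * (1 * (1 - x) ^ (-α)) :=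
          mul_le_mul (one_sub_rpow_le_max_mul hx.1.le hx.2.le)
            (mul_le_mul_of_nonneg_right hxα (rpow_nonneg h1x.le _))
            (mul_nonneg (rpow_nonneg hx.1.le _) (rpow_nonneg h1x.le _))
            (mul_nonneg (le_max_of_le_right zero_le_one) h1x.le)
      _ = _ := by ring

theorem integral_one_sub_rpow_mul_rpow_mul_one_sub_rpow {α s : ℝ} (hα₀ : 0 < α) (hα₁ : α < 1)
    (hs : 0 < s) :
    ∫ x in Ioo (0:ℝ) 1, (1 - x ^ s) * (α * x ^ (α - 1) * (1 - x) ^ (-α - 1))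
      = s * ∫ x in Ioo (0:ℝ) 1, x ^ ((s + α) - 1) * (1 - x) ^ ((1 - α) - 1) := by
  set F := fun x : ℝ => (1 - x ^ s) * (x ^ α * (1 - x) ^ (-α))
  have hint₁ := integrableOn_one_sub_rpow_mul_rpow_mul_one_sub_rpow hα₀ hα₁ hs.le
  have hint₂ :=
    (integrableOn_rpow_mul_one_sub_rpow_Ioo (add_pos hs hα₀) (sub_pos.2 hα₁)).const_mul s
  have hderiv : ∀ x ∈ Ioo (0:ℝ) 1, HasDerivAt F
      ((1 - x ^ s) * (α * x ^ (α - 1) * (1 - x) ^ (-α - 1))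
        - s * (x ^ ((s + α) - 1) * (1 - x) ^ ((1 - α) - 1))) x := by
    intro x hx
    refine (((hasDerivAt_rpow_const (p := s) (Or.inl hx.1.ne')).const_sub 1).mul
      (hasDerivAt_rpow_mul_one_sub_rpow_neg hx)).congr_deriv ?_
    rw [show (s + α) - 1 = (s - 1) + α by ring, rpow_add hx.1, show (1 - α) - 1 = -α by ring]
    ring
  have hF₀ : Tendsto F (𝓝[>] 0) (𝓝 0) := by
    have hc : ContinuousAt F 0 :=
      (continuousAt_const.sub (continuousAt_rpow_const _ _ (Or.inr hs.le))).mul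
        ((continuousAt_rpow_const _ _ (Or.inr hα₀.le)).mul
          ((continuousAt_const.sub continuousAt_id).rpow_const (Or.inl (by norm_num))))
    simpa [F, zero_rpow hα₀.ne'] using hc.tendsto.mono_left nhdsWithin_le_nhds
  have hFTC := intervalIntegral.integral_eq_sub_of_hasDerivAt_of_tendsto zero_lt_one hderiv
    ((intervalIntegrable_iff_integrableOn_Ioo_of_le zero_le_one).2 (hint₁.sub hint₂)) hF₀
    (tendsto_one_sub_rpow_mul_rpow_mul_one_sub_rpow_neg_nhdsLT_one hα₀.le hα₁ hs.le)
  rw [intervalIntegral.integral_of_le zero_le_one, integral_Ioc_eq_integral_Ioo,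
    integral_sub hint₁ hint₂, integral_const_mul, sub_zero, sub_eq_zero] at hFTC
  exact hFTC

theorem gamma_ratio_integral (α u : ℝ) (hα : α ∈ Set.Ioo (0:ℝ) 1) (hu : 0 ≤ u) :
    Real.Gamma (α*u + α) / Real.Gamma (α*u)
      = (1 / Real.Gamma (1 - α)) *
          ∫ y in Set.Ioo (0:ℝ) 1, (1 - y ^ u) * (1 - y ^ (1/α)) ^ (-α - 1) := by
  obtain ⟨hα₀, hα₁⟩ := hα
  rcases hu.eq_or_lt with rfl | hu
  · -- both sides vanish: `Γ 0 = 0` in Mathlib, and so does `1 - y ^ 0`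
    simp
  have hsubst : ∫ y in Ioo (0:ℝ) 1, (1 - y ^ u) * (1 - y ^ (1/α)) ^ (-α - 1)
      = ∫ x in Ioo (0:ℝ) 1, (1 - x ^ (α * u)) * (α * x ^ (α - 1) * (1 - x) ^ (-α - 1)) := by
    rw [← integral_comp_rpow_Ioo_zero_one _ hα₀]
    refine setIntegral_congr_fun measurableSet_Ioo fun x hx => ?_
    rw [smul_eq_mul, ← rpow_mul hx.1.le, ← rpow_mul hx.1.le, mul_one_div_cancel hα₀.ne',
      rpow_one]
    ring
  rw [hsubst, integral_one_sub_rpow_mul_rpow_mul_one_sub_rpow hα₀ hα₁ (mul_pos hα₀ hu),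
    integral_rpow_mul_one_sub_rpow_Ioo (by positivity) (sub_pos.2 hα₁),
    show α * u + α + (1 - α) = α * u + 1 by ring, Gamma_add_one (by positivity)]
  have hΓu := (Gamma_pos_of_pos (mul_pos hα₀ hu)).ne'
  have hΓα := (Gamma_pos_of_pos (sub_pos.2 hα₁)).ne'
  field_simp
end

section
/- For α ∈ (0,1), β ≥ 1 − 1/α and 0 < y < 1, ∫_0^y r^{β+1/α} (1 − r^{1/α})^{−α−1} dr = y^{β+1/α+1}/(β+1/α+1) · ₂F₁(α(β+1)+1, α+1; α(β+1)+2; y^{1/α}), where ₂F₁ is the Gauss hypergeometric function given by its power series. -/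
/-!
Expand `(1 - r^(1/α))^(-(α+1)) = ∑ₖ (α+1)ₖ/k! · r^(k/α)` by the binomial series and integrate
term by term; this is legitimate because the integrals of the absolute values are dominated by
the absolutely convergent binomial series at `y^(1/α) < 1`. With `A = α(β+1) + 1` the `k`-th term
integrates to `y^(β+1/α+1) (y^(1/α))^k · α/(A+k)`, and `A/(A+k) = (A)ₖ/(A+1)ₖ` turns the series
into `₂F₁(A, α+1; A+1; y^(1/α))`.
-/

open Real MeasureTheory

/-- The Gauss hypergeometric function ₂F₁ defined by its power series. -/
noncomputable def hyp2F1 (a b c z : ℝ) : ℝ :=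
  ∑' k : ℕ, ((ascPochhammer ℝ k).eval a * (ascPochhammer ℝ k).eval b /
      (ascPochhammer ℝ k).eval c) * z ^ k / (Nat.factorial k : ℝ)

open Polynomial
open scoped Nat

lemma Ring.choose_add_sub_one_eq_ascPochhammer_eval_div {K : Type*} [Field K] [CharZero K]
    (s : K) (n : ℕ) : Ring.choose (s + n - 1) n = (ascPochhammer K n).eval s / n ! := by
  rw [Ring.choose_eq_smul, descPochhammer_smeval_eq_ascPochhammer, ascPochhammer_smeval_eq_eval,
    smul_eq_mul, inv_mul_eq_div]
  ring_nf

lemma mem_eball_zero_one_iff {x : ℝ} : x ∈ Metric.eball (0 : ℝ) 1 ↔ |x| < 1 := by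
  rw [← ENNReal.coe_one, Metric.eball_coe, NNReal.coe_one, mem_ball_zero_iff, norm_eq_abs]

lemma one_sub_rpow_neg_hasFPowerSeriesOnBall_zero (s : ℝ) :
    HasFPowerSeriesOnBall (fun x ↦ (1 - x) ^ (-s))
      (.ofScalars ℝ fun n ↦ (ascPochhammer ℝ n).eval s / n !) 0 1 := by
  have h := Real.one_div_one_sub_rpow_hasFPowerSeriesOnBall_zero s
  simp only [Ring.choose_add_sub_one_eq_ascPochhammer_eval_div] at h
  refine h.congr fun x hx ↦ ?_
  have : x < 1 := (le_abs_self x).trans_lt (mem_eball_zero_one_iff.mp hx)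
  rw [rpow_neg (by linarith)]
  exact one_div _

lemma hasSum_ascPochhammer_mul_pow (s : ℝ) {x : ℝ} (hx : |x| < 1) :
    HasSum (fun n : ℕ ↦ (ascPochhammer ℝ n).eval s / n ! * x ^ n) ((1 - x) ^ (-s)) := by
  have h := (one_sub_rpow_neg_hasFPowerSeriesOnBall_zero s).hasSum (mem_eball_zero_one_iff.mpr hx)
  simpa [FormalMultilinearSeries.ofScalars_apply_eq, mul_comm] using h

lemma summable_abs_ascPochhammer_mul_pow (s : ℝ) {x : ℝ} (hx : |x| < 1) :
    Summable fun n : ℕ ↦ |(ascPochhammer ℝ n).eval s / n !| * |x| ^ n := by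
  have h := FormalMultilinearSeries.summable_norm_apply _
    (Metric.eball_subset_eball (one_sub_rpow_neg_hasFPowerSeriesOnBall_zero s).r_le
      (mem_eball_zero_one_iff.mpr hx))
  simpa [FormalMultilinearSeries.ofScalars_apply_eq, mul_comm, abs_div] using h

lemma integrableOn_Ioo_rpow {q y : ℝ} (hq : -1 < q) (hy : 0 ≤ y) :
    IntegrableOn (fun r : ℝ ↦ r ^ q) (Set.Ioo 0 y) :=
  (intervalIntegrable_iff_integrableOn_Ioo_of_le hy).mp
    (intervalIntegral.intervalIntegrable_rpow' hq)

lemma setIntegral_Ioo_rpow {q y : ℝ} (hq : -1 < q) (hy : 0 ≤ y) :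
    ∫ r in Set.Ioo 0 y, r ^ q = y ^ (q + 1) / (q + 1) := by
  rw [← integral_Ioc_eq_integral_Ioo, ← intervalIntegral.integral_of_le hy, integral_rpow (.inl hq),
    zero_rpow (by linarith), sub_zero]

lemma hasSum_setIntegral_Ioo_tsum_mul_rpow {c q : ℕ → ℝ} {y : ℝ} (hy : 0 ≤ y) (hq : ∀ k, -1 < q k)
    (hsum : Summable fun k ↦ |c k| * (y ^ (q k + 1) / (q k + 1))) :
    HasSum (fun k ↦ c k * (y ^ (q k + 1) / (q k + 1)))
      (∫ r in Set.Ioo 0 y, ∑' k, c k * r ^ q k) := by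
  have hnorm (k : ℕ) :
      ∫ r in Set.Ioo 0 y, ‖c k * r ^ q k‖ = |c k| * (y ^ (q k + 1) / (q k + 1)) := by
    rw [← setIntegral_Ioo_rpow (hq k) hy, ← integral_const_mul]
    refine setIntegral_congr_fun measurableSet_Ioo fun r hr ↦ ?_
    rw [norm_mul, norm_eq_abs, norm_of_nonneg (rpow_nonneg hr.1.le _)]
  simp_rw [← setIntegral_Ioo_rpow (hq _) hy, ← integral_const_mul]
  exact hasSum_integral_of_summable_integral_norm
    (fun k ↦ (integrableOn_Ioo_rpow (hq k) hy).const_mul (c k)) (by simpa only [hnorm] using hsum)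

lemma rpow_add_natCast_mul {r : ℝ} (hr : 0 < r) (p t : ℝ) (k : ℕ) :
    r ^ (p + k * t) = r ^ p * (r ^ t) ^ k := by
  rw [rpow_add hr, mul_comm (k : ℝ), rpow_mul hr.le, rpow_natCast]

theorem hasSum_setIntegral_Ioo_rpow_mul_one_sub_rpow_neg (s : ℝ) {p t y : ℝ} (hp : -1 < p)
    (ht : 0 < t) (hy0 : 0 < y) (hy1 : y < 1) :
    HasSum (fun k : ℕ ↦ (ascPochhammer ℝ k).eval s / k ! * (y ^ (p + k * t + 1) / (p + k * t + 1)))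
      (∫ r in Set.Ioo 0 y, r ^ p * (1 - r ^ t) ^ (-s)) := by
  set c : ℕ → ℝ := fun k ↦ (ascPochhammer ℝ k).eval s / (k ! : ℝ)
  have hq (k : ℕ) : -1 < p + k * t := by
    have : 0 ≤ (k : ℝ) * t := by positivity
    linarith
  have abs_rpow_lt_one {r : ℝ} (hr0 : 0 < r) (hr1 : r < 1) : |r ^ t| < 1 := by
    rw [abs_of_pos (rpow_pos_of_pos hr0 t)]
    exact rpow_lt_one hr0.le hr1 ht
  have hexpand : ∀ r ∈ Set.Ioo 0 y, r ^ p * (1 - r ^ t) ^ (-s) = ∑' k, c k * r ^ (p + k * t) := by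
    rintro r ⟨hr0, hry⟩
    rw [← (hasSum_ascPochhammer_mul_pow s (abs_rpow_lt_one hr0 (hry.trans hy1))).tsum_eq,
      ← tsum_mul_left]
    exact tsum_congr fun k ↦ by rw [rpow_add_natCast_mul hr0]; ring
  rw [setIntegral_congr_fun measurableSet_Ioo hexpand]
  refine hasSum_setIntegral_Ioo_tsum_mul_rpow hy0.le hq ?_
  refine ((summable_abs_ascPochhammer_mul_pow s (abs_rpow_lt_one hy0 hy1)).mul_left
    (y ^ (p + 1) / (p + 1))).of_nonneg_of_le (fun k ↦ ?_) fun k ↦ ?_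
  · exact mul_nonneg (abs_nonneg _) (div_nonneg (rpow_nonneg hy0.le _) (by linarith [hq k]))
  · rw [add_right_comm, rpow_add_natCast_mul hy0, abs_of_pos (rpow_pos_of_pos hy0 t)]
    have hk : 0 ≤ (k : ℝ) * t := by positivity
    calc |c k| * (y ^ (p + 1) * (y ^ t) ^ k / (p + 1 + k * t))
        ≤ |c k| * (y ^ (p + 1) * (y ^ t) ^ k / (p + 1)) := by
          gcongr _ * (_ / ?_) <;> linarith
      _ = y ^ (p + 1) / (p + 1) * (|c k| * (y ^ t) ^ k) := by ring

lemma ascPochhammer_eval_mul_add_natCast {R : Type*} [CommSemiring R] (a : R) (k : ℕ) :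
    (ascPochhammer R k).eval a * (a + k) = a * (ascPochhammer R k).eval (a + 1) := by
  rw [← ascPochhammer_succ_eval, ascPochhammer_succ_left, eval_mul, eval_X, eval_comp, eval_add,
    eval_X, eval_one]

lemma ascPochhammer_eval_div_eval_add_one {a : ℝ} (ha : 0 < a) (k : ℕ) :
    (ascPochhammer ℝ k).eval a / (ascPochhammer ℝ k).eval (a + 1) = a / (a + k) := by
  rw [div_eq_div_iff (ascPochhammer_pos k _ (by linarith)).ne' (by positivity),
    ascPochhammer_eval_mul_add_natCast]

theorem integral_hypergeometric (α β y : ℝ) (hα : α ∈ Set.Ioo (0:ℝ) 1)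
    (hβ : 1 - 1/α ≤ β) (hy : y ∈ Set.Ioo (0:ℝ) 1) :
    ∫ r in Set.Ioo (0:ℝ) y, r ^ (β + 1/α) * (1 - r ^ (1/α)) ^ (-α - 1)
      = y ^ (β + 1/α + 1) / (β + 1/α + 1) *
          hyp2F1 (α*(β+1) + 1) (α + 1) (α*(β+1) + 2) (y ^ (1/α)) := by
  obtain ⟨hα0, -⟩ := hα
  obtain ⟨hy0, hy1⟩ := hy
  have hp : -1 < β + 1 / α := by linarith [one_div_pos.mpr hα0]
  set A := α * (β + 1) + 1
  have hp1 : β + 1 / α + 1 = A / α := by field_simp; ring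
  have hA : 0 < A := by rw [← div_pos_iff_of_pos_right hα0, ← hp1]; linarith
  rw [show -α - 1 = -(α + 1) by ring, show α * (β + 1) + 2 = A + 1 by ring,
    ← (hasSum_setIntegral_Ioo_rpow_mul_one_sub_rpow_neg (α + 1) hp (one_div_pos.mpr hα0) hy0
      hy1).tsum_eq, hyp2F1, ← tsum_mul_left]
  refine tsum_congr fun k ↦ ?_
  rw [mul_div_assoc _ _ (k ! : ℝ), mul_div_right_comm, ascPochhammer_eval_div_eval_add_one hA,
    add_right_comm, rpow_add_natCast_mul hy0, hp1]
  field_simp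
end

section
/- Let α ∈ (0,1], β ≥ 1 − 1/α, and define the polynomial P_n(x) = Γ(αβ+1) Σ_{k=0}^n (−1)^k (n choose k) x^k / Γ(αk + αβ + 1). If L_{α,β} acts on monomials by L_{α,β} x^k = k Φ_{α,β}(k) x^{k−1} − k x^k with Φ_{α,β}(k) = Γ(αk+αβ+1)/Γ(αk+αβ+1−α), then L_{α,β} P_n = −n P_n. -/
/-!
Write `P_n = ∑ c_k x^k`. Since `L` lowers `x^k` to `k Φ(k) x^(k-1)` and scales it by `-k`,
`L P_n = -n P_n` amounts to the coefficient recurrence `(k+1) Φ(k+1) c_(k+1) = (k-n) c_k`.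
As `Φ(k+1) = Γ(α(k+1)+αβ+1) / Γ(αk+αβ+1)`, the Gamma factors telescope against the
denominators of `c_k`, leaving `(k+1) C(n,k+1) = (n-k) C(n,k)`.
-/

section LoweringOperator

variable {R : Type*} [CommRing R]

theorem LinearMap.map_sum_monomials (L : (R → R) →ₗ[R] (R → R)) (c : ℕ → R) (n : ℕ) :
    L (fun x => ∑ k ∈ Finset.range n, c k * x ^ k) =
      ∑ k ∈ Finset.range n, c k • L (fun x => x ^ k) := by
  have monomial_expansion : (fun x => ∑ k ∈ Finset.range n, c k * x ^ k) =
      ∑ k ∈ Finset.range n, c k • fun x : R => x ^ k := by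
    funext x
    simp [Finset.sum_apply]
  simp only [monomial_expansion, map_sum, map_smul]

variable (L : (R → R) →ₗ[R] (R → R)) (φ : ℕ → R)
  (hL : ∀ k : ℕ, L (fun x => x ^ k) = fun x => (k : R) * φ k * x ^ (k - 1) - (k : R) * x ^ k)
include hL

theorem apply_sum_monomials_of_lowering (c : ℕ → R) (n : ℕ) :
    L (fun x => ∑ k ∈ Finset.range (n + 1), c k * x ^ k) = fun x =>
      ∑ k ∈ Finset.range n, ((k + 1 : R) * φ (k + 1) * c (k + 1)) * x ^ k
        - ∑ k ∈ Finset.range (n + 1), (k * c k) * x ^ k := by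
  rw [L.map_sum_monomials]
  funext x
  simp only [hL, Finset.sum_apply, Pi.smul_apply, smul_eq_mul, mul_sub, Finset.sum_sub_distrib]
  congr 1
  · rw [Finset.sum_range_succ']
    simp only [Nat.cast_zero, zero_mul, mul_zero, add_zero, Nat.add_sub_cancel, Nat.cast_succ]
    exact Finset.sum_congr rfl fun k _ => by ring
  · exact Finset.sum_congr rfl fun k _ => by ring

theorem apply_sum_monomials_eq_neg_mul (c : ℕ → R) (n : ℕ)
    (hc : ∀ k < n, (k + 1 : R) * φ (k + 1) * c (k + 1) = (k - n) * c k) :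
    L (fun x => ∑ k ∈ Finset.range (n + 1), c k * x ^ k) =
      fun x => -(n : R) * ∑ k ∈ Finset.range (n + 1), c k * x ^ k := by
  rw [apply_sum_monomials_of_lowering L φ hL]
  funext x
  have top_vanishes : ∑ k ∈ Finset.range n, ((k : R) - n) * c k * x ^ k =
      ∑ k ∈ Finset.range (n + 1), ((k : R) - n) * c k * x ^ k := by
    simp [Finset.sum_range_succ]
  rw [Finset.sum_congr rfl fun k hk => by rw [hc k (Finset.mem_range.mp hk)], top_vanishes,
    ← Finset.sum_sub_distrib, Finset.mul_sum]
  exact Finset.sum_congr rfl fun k _ => by ring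

end LoweringOperator

theorem succ_mul_choose_succ_eq_sub_mul_choose {R : Type*} [CommRing R] {n k : ℕ}
    (hk : k ≤ n) : (k + 1 : R) * n.choose (k + 1) = (n - k) * n.choose k := by
  have h := congrArg (Nat.cast (R := R)) (Nat.choose_succ_right_eq n k)
  push_cast [Nat.cast_sub hk] at h
  linear_combination h

theorem alternating_choose_div_recurrence {K : Type*} [Field K] (A : K) (g : ℕ → K)
    {n k : ℕ} (hk : k ≤ n) (hg : g (k + 1) ≠ 0) :
    (k + 1 : K) * (g (k + 1) / g k) * (A * (-1) ^ (k + 1) * n.choose (k + 1) / g (k + 1)) =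
      (k - n) * (A * (-1) ^ k * n.choose k / g k) := by
  rcases eq_or_ne (g k) 0 with hg₀ | hg₀
  · simp [hg₀]
  field_simp
  linear_combination (-A * (-1) ^ k) * succ_mul_choose_succ_eq_sub_mul_choose (R := K) hk

theorem gaussLaguerre_eigenfunction (α β : ℝ) (hα : α ∈ Set.Ioc (0:ℝ) 1)
    (hβ : 1 - 1/α ≤ β) (L : (ℝ → ℝ) →ₗ[ℝ] (ℝ → ℝ))
    (hL : ∀ k : ℕ, L (fun x => x ^ k) =
      fun x => (k : ℝ) * (Real.Gamma (α*k + α*β + 1) / Real.Gamma (α*k + α*β + 1 - α))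
          * x ^ (k - 1) - (k : ℝ) * x ^ k)
    (n : ℕ) :
    L (fun x => Real.Gamma (α*β + 1) * ∑ k ∈ Finset.range (n+1),
        (-1 : ℝ) ^ k * (n.choose k : ℝ) * x ^ k / Real.Gamma (α*k + α*β + 1))
      = fun x => -(n : ℝ) * (Real.Gamma (α*β + 1) * ∑ k ∈ Finset.range (n+1),
        (-1 : ℝ) ^ k * (n.choose k : ℝ) * x ^ k / Real.Gamma (α*k + α*β + 1)) := by
  have hαβ : α - 1 ≤ α * β := by
    have := mul_le_mul_of_nonneg_left hβ hα.1.le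
    rwa [mul_sub, mul_one, mul_one_div_cancel hα.1.ne'] at this
  have hΓ : ∀ k : ℕ, Real.Gamma (α * k + α * β + 1) ≠ 0 := fun k =>
    (Real.Gamma_pos_of_pos (by linarith [hα.1, mul_nonneg hα.1.le k.cast_nonneg])).ne'
  have expansion : ∀ x : ℝ, Real.Gamma (α*β + 1) * ∑ k ∈ Finset.range (n+1),
      (-1 : ℝ) ^ k * (n.choose k : ℝ) * x ^ k / Real.Gamma (α*k + α*β + 1) =
      ∑ k ∈ Finset.range (n+1),
        Real.Gamma (α*β + 1) * (-1) ^ k * n.choose k / Real.Gamma (α*k + α*β + 1) * x ^ k := by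
    intro x
    rw [Finset.mul_sum]
    exact Finset.sum_congr rfl fun k _ => by ring
  simp only [expansion]
  refine apply_sum_monomials_eq_neg_mul L _ hL _ n fun k hk => ?_
  have shift : α * (k + 1 : ℕ) + α * β + 1 - α = α * k + α * β + 1 := by push_cast; ring
  rw [shift]
  exact alternating_choose_div_recurrence _ (fun k : ℕ => Real.Gamma (α * k + α * β + 1))
    hk.le (hΓ _)
end

section
/- Let α ∈ (0,1], β ≥ 1 − 1/α, and for k ≥ 0 define L x^k = k Φ_{α,β}(k) x^{k−1} − k x^k where Φ_{α,β}(k) = Γ(αk+αβ+1)/Γ(αk+αβ+1−α). Then for every k ≥ 0, ∫_0^∞ (L x^k) e_{α,β}(x) dx = 0, where e_{α,β}(x) = x^{β+1/α−1} e^{−x^{1/α}}/Γ(αβ+1). -/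
/-!
Substituting `x = t^α`, the `m`-th moment of `e_{α,β}` is a Gamma value, `α Γ(αm+αβ+1)/Γ(αβ+1)`,
and `Φ_{α,β}(k)` is exactly the ratio of the `k`-th to the `(k-1)`-st moment. Hence the two terms
of `∫ (L x^k) e_{α,β}` cancel.
-/

open Real MeasureTheory

/-- `e_{α,β}` as normalised in the statement: its total mass is `α`, not `1`, so its moments
carry an extra factor `α`. -/
noncomputable def gaussLaguerreWeight (α β x : ℝ) : ℝ :=
  x ^ (β + 1/α - 1) * exp (-(x ^ (1/α))) / Gamma (α*β + 1)

section
variable {α β : ℝ}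

lemma pow_mul_gaussLaguerreWeight {x : ℝ} (hx : 0 < x) (m : ℕ) :
    x ^ m * gaussLaguerreWeight α β x
      = x ^ ((m : ℝ) + (β + 1/α - 1)) * exp (-(x ^ (1/α))) / Gamma (α*β + 1) := by
  rw [gaussLaguerreWeight, rpow_add hx, rpow_natCast]
  ring

lemma neg_one_lt_natCast_add_exponent (hα : 0 < α) (hαβ : 0 < α*β + 1) (m : ℕ) :
    -1 < (m : ℝ) + (β + 1/α - 1) := by
  have : 0 < β + 1/α := by
    rw [show β + 1/α = (α*β + 1) / α by field_simp]
    positivity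
  linarith [m.cast_nonneg (α := ℝ)]

lemma integrableOn_pow_mul_gaussLaguerreWeight (hα : 0 < α) (hαβ : 0 < α*β + 1) (m : ℕ) :
    IntegrableOn (fun x => x ^ m * gaussLaguerreWeight α β x) (Set.Ioi 0) :=
  IntegrableOn.congr_fun
    (Integrable.div_const (integrableOn_rpow_mul_exp_neg_rpow
      (neg_one_lt_natCast_add_exponent hα hαβ m) (one_div_pos.2 hα)) _)
    (fun _ hx => (pow_mul_gaussLaguerreWeight hx m).symm) measurableSet_Ioi

lemma integral_pow_mul_gaussLaguerreWeight (hα : 0 < α) (hαβ : 0 < α*β + 1) (m : ℕ) :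
    ∫ x in Set.Ioi 0, x ^ m * gaussLaguerreWeight α β x
      = α * Gamma (α*m + α*β + 1) / Gamma (α*β + 1) := by
  rw [setIntegral_congr_fun measurableSet_Ioi (fun _ hx => pow_mul_gaussLaguerreWeight hx m),
    integral_div, integral_rpow_mul_exp_neg_rpow (one_div_pos.2 hα)
      (neg_one_lt_natCast_add_exponent hα hαβ m)]
  field_simp
  ring_nf

end

theorem gaussLaguerre_invariant_on_monomials (α β : ℝ) (hα : α ∈ Set.Ioc (0:ℝ) 1)
    (hβ : 1 - 1/α ≤ β) (k : ℕ) :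
    ∫ x in Set.Ioi (0:ℝ),
        ((k : ℝ) * (Real.Gamma (α*k + α*β + 1) / Real.Gamma (α*k + α*β + 1 - α))
            * x ^ (k - 1) - (k : ℝ) * x ^ k)
          * (x ^ (β + 1/α - 1) * Real.exp (-(x ^ (1/α))) / Real.Gamma (α*β + 1))
      = 0 := by
  obtain ⟨hα0, -⟩ := hα
  have hαβ : 0 < α*β + 1 := by
    have := mul_le_mul_of_nonneg_left hβ hα0.le
    rw [mul_sub, mul_one_div_cancel hα0.ne'] at this
    linarith
  cases k with
  | zero => simp
  | succ n =>
    set Φ := Gamma (α*(n+1 : ℕ) + α*β + 1) / Gamma (α*(n+1 : ℕ) + α*β + 1 - α) with hΦ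
    have hshift : α*(n+1 : ℕ) + α*β + 1 - α = α*n + α*β + 1 := by push_cast; ring
    have hΓ : Gamma (α*n + α*β + 1) ≠ 0 :=
      (Gamma_pos_of_pos (by rw [add_assoc]; exact add_pos_of_nonneg_of_pos (by positivity) hαβ)).ne'
    calc _ = ∫ x in Set.Ioi (0:ℝ), (↑(n+1) * Φ) * (x ^ n * gaussLaguerreWeight α β x)
              - ↑(n+1) * (x ^ (n+1) * gaussLaguerreWeight α β x) := by
            simp only [gaussLaguerreWeight, Nat.add_sub_cancel]; congr 1; ext x; ring
      _ = 0 := by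
        rw [integral_sub ((integrableOn_pow_mul_gaussLaguerreWeight hα0 hαβ n).const_mul _)
            ((integrableOn_pow_mul_gaussLaguerreWeight hα0 hαβ _).const_mul _),
          integral_const_mul, integral_const_mul, integral_pow_mul_gaussLaguerreWeight hα0 hαβ,
          integral_pow_mul_gaussLaguerreWeight hα0 hαβ, hΦ, hshift]
        -- keeps `field_simp` from normalising the argument of this factor before cancelling it
        generalize Gamma (α * ↑n + α * β + 1) = G at hΓ ⊢
        field_simp
        ring
end

section
/- Define for α ∈ (0,1): A_α = (1+α)^{α+1}, B_α = α^α csc(π/(2(1+α))) / sin^α(πα/(2(1+α))), and C_α = α^α cos^{α+1}(πα/2) / sin^α(πα/2). Then C_α ≤ B_α ≤ A_α for all α ∈ (0,1). -/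
open Real

theorem constants_ordering (α : ℝ) (hα : α ∈ Set.Ioo (0:ℝ) 1) :
    α ^ α * Real.cos (Real.pi * α / 2) ^ (α + 1) / Real.sin (Real.pi * α / 2) ^ α
        ≤ α ^ α * (1 / Real.sin (Real.pi / (2*(1+α)))) /
            Real.sin (Real.pi * α / (2*(1+α))) ^ α ∧
      α ^ α * (1 / Real.sin (Real.pi / (2*(1+α)))) /
          Real.sin (Real.pi * α / (2*(1+α))) ^ α
        ≤ (1 + α) ^ (α + 1) := by
  obtain ⟨h0, h1⟩ := hα
  have hπ := Real.pi_pos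
  have h1α : (0:ℝ) < 1 + α := by linarith
  set x1 := Real.pi / (2*(1+α)) with hx1
  set x2 := Real.pi * α / (2*(1+α)) with hx2
  set x3 := Real.pi * α / 2 with hx3
  have hx1pos : 0 < x1 := by rw [hx1]; positivity
  have hx1le : x1 ≤ π/2 := by
    rw [hx1, div_le_div_iff₀ (by positivity) (by norm_num)]
    nlinarith
  have hx2pos : 0 < x2 := by rw [hx2]; positivity
  have hx2le : x2 ≤ π/2 := by
    rw [hx2, div_le_div_iff₀ (by positivity) (by norm_num)]
    nlinarith
  have hx3pos : 0 < x3 := by rw [hx3]; positivity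
  have hx3lt : x3 < π/2 := by
    rw [hx3]
    have : Real.pi * α < Real.pi * 1 := by nlinarith
    linarith
  have hs1 : 0 < Real.sin x1 :=
    Real.sin_pos_of_pos_of_lt_pi hx1pos (lt_of_le_of_lt hx1le (by linarith))
  have hs2 : 0 < Real.sin x2 :=
    Real.sin_pos_of_pos_of_lt_pi hx2pos (lt_of_le_of_lt hx2le (by linarith))
  have hs3 : 0 < Real.sin x3 :=
    Real.sin_pos_of_pos_of_lt_pi hx3pos (by linarith)
  have hc3 : 0 < Real.cos x3 := Real.cos_pos_of_mem_Ioo ⟨by linarith, hx3lt⟩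
  -- Jordan inequality bounds
  have hJ1 : 1/(1+α) ≤ Real.sin x1 := by
    have := Real.mul_le_sin hx1pos.le hx1le
    calc 1/(1+α) = 2/π * x1 := by rw [hx1]; field_simp
    _ ≤ Real.sin x1 := this
  have hJ2 : α/(1+α) ≤ Real.sin x2 := by
    have := Real.mul_le_sin hx2pos.le hx2le
    calc α/(1+α) = 2/π * x2 := by rw [hx2]; field_simp
    _ ≤ Real.sin x2 := this
  have h23 : Real.sin x2 ≤ Real.sin x3 := by
    apply Real.sin_le_sin_of_le_of_le_pi_div_two (by linarith) hx3lt.le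
    rw [hx2, hx3, div_le_div_iff₀ (by positivity) (by norm_num)]
    nlinarith
  constructor
  · -- C ≤ B
    have hcos : Real.cos x3 ^ (α+1) ≤ 1 :=
      Real.rpow_le_one hc3.le (Real.cos_le_one x3) (by linarith)
    have hinv : (1:ℝ) ≤ 1 / Real.sin x1 :=
      one_le_one_div hs1 (Real.sin_le_one x1)
    gcongr
    · exact hcos.trans hinv
  · -- B ≤ A
    have key : α ^ α * (1 / Real.sin x1) / Real.sin x2 ^ α
        ≤ α ^ α * (1+α) / (α/(1+α)) ^ α := by
      gcongr
      · calc 1 / Real.sin x1 ≤ 1 / (1/(1+α)) :=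
              one_div_le_one_div_of_le (by positivity) hJ1
          _ = 1 + α := one_div_one_div _
    have heq : α ^ α * (1+α) / (α/(1+α)) ^ α = (1+α) ^ (α+1) := by
      rw [Real.div_rpow h0.le h1α.le, Real.rpow_add h1α, Real.rpow_one]
      have hαα : (0:ℝ) < α ^ α := Real.rpow_pos_of_pos h0 α
      field_simp
    linarith [key, heq ▸ key]
end

section
/- Define κ̄_α(θ) = α^α (sin((1+α)θ)/sin θ) (sin((1+α)θ)/sin(αθ))^α for θ ∈ (0, π/2) and α ∈ (0,1]. Then θ ↦ κ̄_α(θ) is strictly decreasing on (0, π/2), with limits κ̄_α(0+) = (1+α)^{α+1} and κ̄_α(π/2−) = α^α cos^{α+1}(πα/2)/sin^α(πα/2), and κ̄_α(π/(2(1+α))) = α^α csc(π/(2(1+α)))/sin^α(πα/(2(1+α))). -/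
/-!
On `(0, π/2)` we have `κ̄_α = α^α · exp F` with
`F θ = (1+α) log sin((1+α)θ) - log sin θ - α log sin(αθ)`, so
`F' θ = (1+α)² cot((1+α)θ) - cot θ - α² cot(αθ)`. This is negative because `t ↦ t cot t` is
strictly decreasing on `(0, π)` (its derivative is `(sin t cos t - t) / sin² t`): comparing its
values at `θ`, `αθ` and `(1+α)θ`, weighted by `1` and `α`, gives exactly `F' < 0`.
The limit at `0` follows from `sin(aθ)/sin(bθ) → a/b`; at `π/2` the function is continuous and
`sin((1+α)π/2) = cos(απ/2)`.
-/

open Filter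

/-- The function κ̄_α. -/
noncomputable def kappaBar (α θ : ℝ) : ℝ :=
  α ^ α * (Real.sin ((1+α)*θ) / Real.sin θ) *
    (Real.sin ((1+α)*θ) / Real.sin (α*θ)) ^ α

open Real Set Topology

lemma strictAntiOn_Ioo_of_hasDerivAt_neg {f f' : ℝ → ℝ} {a b : ℝ}
    (hf : ∀ x ∈ Ioo a b, HasDerivAt f (f' x) x) (hf' : ∀ x ∈ Ioo a b, f' x < 0) :
    StrictAntiOn f (Ioo a b) :=
  strictAntiOn_of_hasDerivWithinAt_neg (convex_Ioo a b)
    (fun x hx ↦ (hf x hx).continuousAt.continuousWithinAt)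
    (by simpa only [interior_Ioo] using fun x hx ↦ (hf x hx).hasDerivWithinAt)
    (by simpa only [interior_Ioo] using hf')

lemma hasDerivAt_cot {x : ℝ} (hx : sin x ≠ 0) : HasDerivAt cot (-1 / sin x ^ 2) x := by
  have h := (hasDerivAt_cos x).div (hasDerivAt_sin x) hx
  rw [show cos / sin = cot from funext fun y ↦ (cot_eq_cos_div_sin y).symm] at h
  refine h.congr_deriv ?_
  rw [div_left_inj' (pow_ne_zero 2 hx)]
  linear_combination -sin_sq_add_cos_sq x

lemma strictAntiOn_mul_cot : StrictAntiOn (fun t ↦ t * cot t) (Ioo 0 π) := by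
  refine strictAntiOn_Ioo_of_hasDerivAt_neg (f' := fun t ↦ cot t + t * (-1 / sin t ^ 2))
    (fun t ht ↦ ?_) (fun t ht ↦ ?_)
  · exact ((hasDerivAt_id' t).fun_mul
      (hasDerivAt_cot (sin_pos_of_pos_of_lt_pi ht.1 ht.2).ne')).congr_deriv (by ring)
  · have hs := sin_pos_of_pos_of_lt_pi ht.1 ht.2
    have hsincos : sin t * cos t < t := by
      nlinarith [sin_lt (mul_pos two_pos ht.1), sin_two_mul t]
    have : cot t + t * (-1 / sin t ^ 2) = (sin t * cos t - t) / sin t ^ 2 := by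
      rw [cot_eq_cos_div_sin]; field_simp; ring
    rw [this]
    exact div_neg_of_neg_of_pos (by linarith) (by positivity)

lemma sq_add_mul_cot_lt {a b θ : ℝ} (ha : 0 < a) (hb : 0 < b) (hθ : 0 < θ)
    (h : (a + b) * θ < π) :
    (a + b) ^ 2 * cot ((a + b) * θ) < a ^ 2 * cot (a * θ) + b ^ 2 * cot (b * θ) := by
  have hab : (a + b) * θ ∈ Ioo 0 π := ⟨by positivity, h⟩
  have ha' := strictAntiOn_mul_cot (show a * θ ∈ Ioo 0 π from ⟨by positivity, by nlinarith⟩) hab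
    (by nlinarith)
  have hb' := strictAntiOn_mul_cot (show b * θ ∈ Ioo 0 π from ⟨by positivity, by nlinarith⟩) hab
    (by nlinarith)
  simp only at ha' hb'
  nlinarith [mul_lt_mul_of_pos_left ha' ha, mul_lt_mul_of_pos_left hb' hb]

lemma hasDerivAt_log_sin_mul {c θ : ℝ} (h : sin (c * θ) ≠ 0) :
    HasDerivAt (fun x ↦ log (sin (c * x))) (c * cot (c * θ)) θ := by
  have hlin : HasDerivAt (fun x ↦ c * x) c θ := by simpa using (hasDerivAt_id θ).const_mul c
  convert hlin.sin.log h using 1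
  rw [cot_eq_cos_div_sin]; ring

lemma strictAntiOn_log_sin_combination {a b : ℝ} (ha : 0 < a) (hb : 0 < b) :
    StrictAntiOn (fun θ ↦ (a + b) * log (sin ((a + b) * θ)) - a * log (sin (a * θ))
      - b * log (sin (b * θ))) (Ioo 0 (π / (a + b))) := by
  have hdom : ∀ θ ∈ Ioo 0 (π / (a + b)), (a + b) * θ < π := fun θ hθ ↦
    (lt_div_iff₀' (by positivity)).1 hθ.2
  refine strictAntiOn_Ioo_of_hasDerivAt_neg
    (f' := fun θ ↦ (a + b) * ((a + b) * cot ((a + b) * θ)) - a * (a * cot (a * θ))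
      - b * (b * cot (b * θ))) (fun θ hθ ↦ ?_)
    (fun θ hθ ↦ by nlinarith [sq_add_mul_cot_lt ha hb hθ.1 (hdom θ hθ)])
  have hsin : ∀ c, 0 < c → c ≤ a + b → sin (c * θ) ≠ 0 := fun c hc hcab ↦
    (sin_pos_of_pos_of_lt_pi (mul_pos hc hθ.1) (by nlinarith [hθ.1, hdom θ hθ])).ne'
  exact (((hasDerivAt_log_sin_mul (hsin _ (by positivity) le_rfl)).const_mul _).sub
    ((hasDerivAt_log_sin_mul (hsin a ha (by linarith))).const_mul a)).sub
    ((hasDerivAt_log_sin_mul (hsin b hb (by linarith))).const_mul b)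

lemma kappaBar_eq_mul_exp {α θ : ℝ} (hθ : 0 < sin θ) (hαθ : 0 < sin (α * θ))
    (h : 0 < sin ((1 + α) * θ)) :
    kappaBar α θ = α ^ α *
      exp ((1 + α) * log (sin ((1 + α) * θ)) - log (sin θ) - α * log (sin (α * θ))) := by
  have hfirst : sin ((1 + α) * θ) / sin θ = exp (log (sin ((1 + α) * θ)) - log (sin θ)) := by
    rw [exp_sub, exp_log h, exp_log hθ]
  have hsecond : (sin ((1 + α) * θ) / sin (α * θ)) ^ α
      = exp ((log (sin ((1 + α) * θ)) - log (sin (α * θ))) * α) := by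
    rw [rpow_def_of_pos (div_pos h hαθ), log_div h.ne' hαθ.ne']
  rw [kappaBar, hfirst, hsecond, mul_assoc, ← exp_add]
  ring_nf

lemma strictAntiOn_kappaBar {α : ℝ} (h0 : 0 < α) (h1 : α ≤ 1) :
    StrictAntiOn (kappaBar α) (Ioo 0 (π / 2)) := by
  have hsub : Ioo 0 (π / 2) ⊆ Ioo 0 (π / (1 + α)) :=
    Ioo_subset_Ioo_right (div_le_div_of_nonneg_left pi_pos.le (by linarith) (by linarith))
  have hlog := (strictAntiOn_log_sin_combination one_pos h0).mono hsub
  simp only [one_mul] at hlog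
  have hsin : ∀ c, 0 < c → c ≤ 1 + α → ∀ θ ∈ Ioo 0 (π / 2), 0 < sin (c * θ) :=
    fun c hc hcα θ hθ ↦ sin_pos_of_pos_of_lt_pi (mul_pos hc hθ.1) (by nlinarith [hθ.1, hθ.2])
  have hkappa : ∀ θ ∈ Ioo 0 (π / 2), kappaBar α θ = α ^ α * exp ((1 + α) *
      log (sin ((1 + α) * θ)) - log (sin θ) - α * log (sin (α * θ))) := fun θ hθ ↦
    kappaBar_eq_mul_exp (by simpa using hsin 1 one_pos (by linarith) θ hθ)
      (hsin α h0 (by linarith) θ hθ) (hsin _ (by linarith) le_rfl θ hθ)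
  intro x hx y hy hxy
  rw [hkappa x hx, hkappa y hy]
  exact mul_lt_mul_of_pos_left (exp_lt_exp.2 (hlog hx hy hxy)) (rpow_pos_of_pos h0 α)

lemma sin_eq_mul_sinc (x : ℝ) : sin x = x * sinc x := by
  rcases eq_or_ne x 0 with rfl | hx
  · simp
  · rw [sinc_of_ne_zero hx]; field_simp

lemma tendsto_sin_mul_div_sin_mul (a : ℝ) {b : ℝ} (hb : b ≠ 0) :
    Tendsto (fun θ ↦ sin (a * θ) / sin (b * θ)) (𝓝[≠] 0) (𝓝 (a / b)) := by
  have hsinc : ∀ c : ℝ, Continuous fun θ ↦ c * sinc (c * θ) := fun c ↦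
    continuous_const.mul (continuous_sinc.comp (continuous_const_mul c))
  have hlim : Tendsto (fun θ ↦ a * sinc (a * θ) / (b * sinc (b * θ))) (𝓝 0) (𝓝 (a / b)) := by
    simpa using ((hsinc a).continuousAt.div₀ (hsinc b).continuousAt (a := 0)
      (by simpa using hb)).tendsto
  refine (hlim.mono_left nhdsWithin_le_nhds).congr' ?_
  filter_upwards [self_mem_nhdsWithin] with θ (hθ : θ ≠ 0)
  rw [sin_eq_mul_sinc (a * θ), sin_eq_mul_sinc (b * θ), mul_right_comm a, mul_right_comm b,
    mul_div_mul_right _ _ hθ]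

lemma tendsto_kappaBar_zero {α : ℝ} (h0 : 0 < α) :
    Tendsto (kappaBar α) (𝓝[>] 0) (𝓝 ((1 + α) ^ (α + 1))) := by
  have hfirst := tendsto_sin_mul_div_sin_mul (1 + α) one_ne_zero
  simp only [one_mul, div_one] at hfirst
  have hsecond := tendsto_sin_mul_div_sin_mul (1 + α) h0.ne'
  have hval : α ^ α * (1 + α) * ((1 + α) / α) ^ α = (1 + α) ^ (α + 1) := by
    rw [div_rpow (by linarith) h0.le, rpow_add_one (by linarith)]
    field_simp [(rpow_pos_of_pos h0 α).ne']
  rw [← hval]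
  exact ((tendsto_const_nhds.mul hfirst).mul (hsecond.rpow_const (Or.inr h0.le))).mono_left
    (nhdsWithin_mono _ fun θ (hθ : 0 < θ) ↦ hθ.ne')

lemma tendsto_kappaBar_pi_div_two {α : ℝ} (h0 : 0 < α) (h1 : α ≤ 1) :
    Tendsto (kappaBar α) (𝓝[<] (π / 2))
      (𝓝 (α ^ α * cos (π * α / 2) ^ (α + 1) / sin (π * α / 2) ^ α)) := by
  have hsin : 0 < sin (π * α / 2) :=
    sin_pos_of_pos_of_lt_pi (by positivity) (by nlinarith [pi_pos])
  have hcos : 0 ≤ cos (π * α / 2) :=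
    cos_nonneg_of_mem_Icc ⟨by nlinarith [pi_pos], by nlinarith [pi_pos]⟩
  have hsin' : sin (α * (π / 2)) ≠ 0 := by
    rw [show α * (π / 2) = π * α / 2 by ring]; exact hsin.ne'
  have hcont : ContinuousAt (kappaBar α) (π / 2) := by
    show ContinuousAt (fun θ ↦ kappaBar α θ) (π / 2)
    simp only [kappaBar]
    fun_prop (disch := simp [sin_pi_div_two, h0.le, hsin'])
  have hval : kappaBar α (π / 2) = α ^ α * cos (π * α / 2) ^ (α + 1) / sin (π * α / 2) ^ α := by
    rw [kappaBar, show (1 + α) * (π / 2) = π * α / 2 + π / 2 by ring, sin_add_pi_div_two,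
      sin_pi_div_two, show α * (π / 2) = π * α / 2 by ring, div_rpow hcos hsin.le,
      rpow_add_one' hcos (by linarith)]
    ring
  exact hval ▸ hcont.continuousWithinAt

lemma kappaBar_pi_div_two_mul_one_add {α : ℝ} (h0 : 0 ≤ α) :
    kappaBar α (π / (2 * (1 + α)))
      = α ^ α * (1 / sin (π / (2 * (1 + α)))) / sin (π * α / (2 * (1 + α))) ^ α := by
  have hsin : 0 ≤ sin (π * α / (2 * (1 + α))) :=
    sin_nonneg_of_nonneg_of_le_pi (by positivity)
      (by rw [div_le_iff₀ (by positivity)]; nlinarith [pi_pos])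
  rw [kappaBar, show (1 + α) * (π / (2 * (1 + α))) = π / 2 by field_simp, sin_pi_div_two,
    show α * (π / (2 * (1 + α))) = π * α / (2 * (1 + α)) by ring, div_rpow zero_le_one hsin,
    one_rpow]
  ring

theorem kappaBar_properties (α : ℝ) (hα : α ∈ Set.Ioc (0:ℝ) 1) :
    StrictAntiOn (kappaBar α) (Set.Ioo 0 (Real.pi/2)) ∧
    Tendsto (kappaBar α) (nhdsWithin 0 (Set.Ioi 0)) (nhds ((1+α) ^ (α+1))) ∧
    Tendsto (kappaBar α) (nhdsWithin (Real.pi/2) (Set.Iio (Real.pi/2)))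
      (nhds (α ^ α * Real.cos (Real.pi*α/2) ^ (α+1) / Real.sin (Real.pi*α/2) ^ α)) ∧
    kappaBar α (Real.pi / (2*(1+α)))
      = α ^ α * (1 / Real.sin (Real.pi / (2*(1+α)))) /
          Real.sin (Real.pi*α / (2*(1+α))) ^ α := by
  obtain ⟨h0, h1⟩ := hα
  exact ⟨strictAntiOn_kappaBar h0 h1, tendsto_kappaBar_zero h0, tendsto_kappaBar_pi_div_two h0 h1,
    kappaBar_pi_div_two_mul_one_add h0.le⟩
end

section
/- For α ∈ (0,1) and θ ∈ (0, π/2), the quantity ς(θ) = 1 − tan θ / tan((1+α)θ) satisfies ς(θ) = sin(αθ)/(sin((1+α)θ) cos θ), and θ ↦ ς(θ) is strictly increasing on (0, π/2) with ς(0+) = α/(1+α) and ς(θ) → ∞ as θ → π/2. -/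
open Filter

/-- The saddle point parametrization ς(θ). -/
noncomputable def sigmaOf (α θ : ℝ) : ℝ :=
  1 - Real.tan θ / Real.tan ((1+α)*θ)

/-!
With `u = (1 + α) θ`, expanding `sin (α θ) = sin (u - θ)` turns `1 - tan θ / tan u` into
`sin (α θ) / (sin u cos θ)`. By product-to-sum, `2 / ς(θ) = 1 + sin ((2 + α) θ) / sin (α θ)`, and
the derivative of this ratio has numerator `sin ((1 + α) φ) - (1 + α) sin φ` with `φ = 2 θ`, which
is negative by strict concavity of `sin` on `[0, π]`; hence `ς` is increasing. Near `0` one writes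
`sin x = x sinc x`, and near `π / 2` the factor `1 / cos θ` blows up while
`sin (α θ) / sin ((1 + α) θ)` stays positive.
-/

open Real Set Topology

lemma sin_mul_lt_mul_sin {c φ : ℝ} (hc1 : 1 < c) (hc2 : c ≤ 2) (hφ0 : 0 < φ) (hφπ : φ < π) :
    sin (c * φ) < c * sin φ := by
  have hc0 : 0 < c := by linarith
  rcases le_or_gt (c * φ) π with hcφ | hcφ
  · have hconc := strictConcaveOn_sin_Icc.2 ⟨by positivity, hcφ⟩ ⟨le_rfl, pi_pos.le⟩
      (by positivity : c * φ ≠ 0) (inv_pos.2 hc0) (sub_pos.2 (inv_lt_one_of_one_lt₀ hc1))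
      (add_sub_cancel _ _)
    simp only [smul_eq_mul, sin_zero, mul_zero, add_zero, inv_mul_cancel_left₀ hc0.ne'] at hconc
    rwa [inv_mul_lt_iff₀ hc0] at hconc
  · have : sin (c * φ) ≤ 0 := by
      rw [← sin_sub_two_pi]
      apply sin_nonpos_of_nonpos_of_neg_pi_le <;> nlinarith
    nlinarith [sin_pos_of_pos_of_lt_pi hφ0 hφπ]

lemma sigmaOf_eq_sin_div {α θ : ℝ} (hcos : cos θ ≠ 0) (hsin : sin ((1 + α) * θ) ≠ 0) :
    sigmaOf α θ = sin (α * θ) / (sin ((1 + α) * θ) * cos θ) := by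
  have hsub : sin (α * θ) = sin ((1 + α) * θ) * cos θ - cos ((1 + α) * θ) * sin θ := by
    rw [← sin_sub]; ring_nf
  rw [sigmaOf, tan_eq_sin_div_cos, tan_eq_sin_div_cos, hsub]
  -- if `cos u = 0` then Lean's `tan u` is `0`, so `ς = 1`, which the formula also gives
  rcases eq_or_ne (cos ((1 + α) * θ)) 0 with hC | hC
  · simp [hC, hsin, hcos]
  · field_simp

lemma two_mul_sin_mul_cos_eq (α θ : ℝ) :
    2 * (sin ((1 + α) * θ) * cos θ) = sin ((2 + α) * θ) + sin (α * θ) := by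
  rw [show (2 + α) * θ = (1 + α) * θ + θ by ring, show α * θ = (1 + α) * θ - θ by ring,
    sin_add, sin_sub]
  ring

lemma hasDerivAt_sin_const_mul (c x : ℝ) :
    HasDerivAt (fun t => sin (c * t)) (cos (c * x) * c) x := by
  simpa using ((hasDerivAt_id x).const_mul c).sin

lemma sin_mul_pos_of_mem_Ioo {c θ : ℝ} (hc0 : 0 < c) (hc2 : c ≤ 2) (hθ : θ ∈ Ioo 0 (π / 2)) :
    0 < sin (c * θ) :=
  sin_pos_of_pos_of_lt_pi (mul_pos hc0 hθ.1) (by nlinarith [hθ.1, hθ.2, pi_pos])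

lemma strictAntiOn_sin_div_sin {α : ℝ} (hα0 : 0 < α) (hα1 : α ≤ 1) :
    StrictAntiOn (fun θ => sin ((2 + α) * θ) / sin (α * θ)) (Ioo 0 (π / 2)) := by
  have hsin : ∀ θ ∈ Ioo 0 (π / 2), 0 < sin (α * θ) := fun θ hθ =>
    sin_mul_pos_of_mem_Ioo hα0 (by linarith) hθ
  have hderiv : ∀ θ ∈ Ioo 0 (π / 2), HasDerivAt (fun θ => sin ((2 + α) * θ) / sin (α * θ))
      ((cos ((2 + α) * θ) * (2 + α) * sin (α * θ) - sin ((2 + α) * θ) * (cos (α * θ) * α))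
        / sin (α * θ) ^ 2) θ := fun θ hθ =>
    (hasDerivAt_sin_const_mul _ θ).div (hasDerivAt_sin_const_mul _ θ) (hsin θ hθ).ne'
  apply strictAntiOn_of_deriv_neg (convex_Ioo _ _)
  · exact fun θ hθ => (hderiv θ hθ).continuousAt.continuousWithinAt
  rw [interior_Ioo]
  intro θ hθ
  rw [(hderiv θ hθ).deriv]
  refine div_neg_of_neg_of_pos ?_ (pow_pos (hsin θ hθ) 2)
  have key := sin_mul_lt_mul_sin (c := 1 + α) (φ := 2 * θ) (by linarith) (by linarith)
    (by linarith [hθ.1]) (by linarith [hθ.2])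
  have e1 : sin ((1 + α) * (2 * θ)) =
      sin ((2 + α) * θ) * cos (α * θ) + cos ((2 + α) * θ) * sin (α * θ) := by
    rw [← sin_add]; ring_nf
  have e2 : sin (2 * θ) = sin ((2 + α) * θ) * cos (α * θ) - cos ((2 + α) * θ) * sin (α * θ) := by
    rw [← sin_sub]; ring_nf
  rw [e1, e2] at key
  linarith

lemma sigmaOf_eq_sin_div_of_mem_Ioo {α θ : ℝ} (hα0 : 0 ≤ α) (hα1 : α ≤ 1)
    (hθ : θ ∈ Ioo 0 (π / 2)) :
    sigmaOf α θ = sin (α * θ) / (sin ((1 + α) * θ) * cos θ) :=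
  sigmaOf_eq_sin_div (cos_pos_of_mem_Ioo ⟨by linarith [hθ.1, pi_pos], hθ.2⟩).ne'
    (sin_mul_pos_of_mem_Ioo (by linarith) (by linarith) hθ).ne'

lemma sigmaOf_pos {α θ : ℝ} (hα0 : 0 < α) (hα1 : α ≤ 1) (hθ : θ ∈ Ioo 0 (π / 2)) :
    0 < sigmaOf α θ := by
  rw [sigmaOf_eq_sin_div_of_mem_Ioo hα0.le hα1 hθ]
  have := sin_mul_pos_of_mem_Ioo hα0 (by linarith) hθ
  have := sin_mul_pos_of_mem_Ioo (c := 1 + α) (by linarith) (by linarith) hθ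
  have := cos_pos_of_mem_Ioo ⟨by linarith [hθ.1, pi_pos], hθ.2⟩
  positivity

lemma sigmaOf_inv_eq {α θ : ℝ} (hα0 : 0 < α) (hα1 : α ≤ 1) (hθ : θ ∈ Ioo 0 (π / 2)) :
    (sigmaOf α θ)⁻¹ = (1 + sin ((2 + α) * θ) / sin (α * θ)) / 2 := by
  have hsin := (sin_mul_pos_of_mem_Ioo hα0 (by linarith) hθ).ne'
  rw [sigmaOf_eq_sin_div_of_mem_Ioo hα0.le hα1 hθ, inv_div, eq_div_iff two_ne_zero,
    div_mul_eq_mul_div, mul_comm _ (2 : ℝ), two_mul_sin_mul_cos_eq, add_div, div_self hsin,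
    add_comm]

lemma strictMonoOn_sigmaOf {α : ℝ} (hα0 : 0 < α) (hα1 : α ≤ 1) :
    StrictMonoOn (sigmaOf α) (Ioo 0 (π / 2)) := by
  intro x hx y hy hxy
  have hinv : (sigmaOf α y)⁻¹ < (sigmaOf α x)⁻¹ := by
    rw [sigmaOf_inv_eq hα0 hα1 hx, sigmaOf_inv_eq hα0 hα1 hy]
    linarith [strictAntiOn_sin_div_sin hα0 hα1 hx hy hxy]
  rwa [inv_lt_inv₀ (sigmaOf_pos hα0 hα1 hy) (sigmaOf_pos hα0 hα1 hx)] at hinv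

lemma tendsto_sigmaOf_nhdsGT_zero {α : ℝ} (hα0 : 0 < α) (hα1 : α ≤ 1) :
    Tendsto (sigmaOf α) (𝓝[>] 0) (𝓝 (α / (1 + α))) := by
  have hcont : ContinuousAt
      (fun θ => α * sinc (α * θ) / ((1 + α) * sinc ((1 + α) * θ) * cos θ)) 0 := by
    apply ContinuousAt.div (by fun_prop) (by fun_prop)
    simp only [mul_zero, sinc_zero, cos_zero, mul_one]
    linarith
  have hlim : Tendsto (fun θ => α * sinc (α * θ) / ((1 + α) * sinc ((1 + α) * θ) * cos θ))
      (𝓝[>] 0) (𝓝 (α / (1 + α))) := by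
    simpa using hcont.tendsto.mono_left nhdsWithin_le_nhds
  refine hlim.congr' ?_
  filter_upwards [Ioo_mem_nhdsGT (half_pos pi_pos)] with θ hθ
  have hθ0 := hθ.1.ne'
  rw [sigmaOf_eq_sin_div_of_mem_Ioo hα0.le hα1 hθ, sinc_of_ne_zero (by positivity),
    sinc_of_ne_zero (by positivity)]
  field_simp

lemma tendsto_sigmaOf_nhdsLT_pi_div_two {α : ℝ} (hα0 : 0 < α) (hα1 : α < 1) :
    Tendsto (sigmaOf α) (𝓝[<] (π / 2)) atTop := by
  have hsin : ∀ c, 0 < c → c < 2 → 0 < sin (c * (π / 2)) := fun c h0 h2 =>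
    sin_pos_of_pos_of_lt_pi (by positivity) (by nlinarith [pi_pos])
  have hcont : ContinuousAt (fun θ => sin (α * θ) / sin ((1 + α) * θ)) (π / 2) :=
    ContinuousAt.div (by fun_prop) (by fun_prop) (hsin _ (by linarith) (by linarith)).ne'
  refine (hcont.tendsto.mono_left nhdsWithin_le_nhds |>.pos_mul_atTop
    (div_pos (hsin α hα0 (by linarith)) (hsin _ (by linarith) (by linarith)))
    tendsto_cos_pi_div_two.inv_tendsto_nhdsGT_zero).congr' ?_
  filter_upwards [Ioo_mem_nhdsLT (half_pos pi_pos)] with θ hθ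
  rw [sigmaOf_eq_sin_div_of_mem_Ioo hα0.le hα1.le hθ, div_mul_eq_div_div, Pi.inv_apply,
    div_eq_mul_inv _ (cos θ)]

theorem sigmaOf_properties (α : ℝ) (hα : α ∈ Set.Ioo (0:ℝ) 1) :
    (∀ θ ∈ Set.Ioo (0:ℝ) (Real.pi/2),
        sigmaOf α θ = Real.sin (α*θ) / (Real.sin ((1+α)*θ) * Real.cos θ)) ∧
    StrictMonoOn (sigmaOf α) (Set.Ioo 0 (Real.pi/2)) ∧
    Tendsto (sigmaOf α) (nhdsWithin 0 (Set.Ioi 0)) (nhds (α/(1+α))) ∧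
    Tendsto (sigmaOf α) (nhdsWithin (Real.pi/2) (Set.Iio (Real.pi/2))) atTop := by
  obtain ⟨hα0, hα1⟩ := hα
  exact ⟨fun θ hθ => sigmaOf_eq_sin_div_of_mem_Ioo hα0.le hα1.le hθ,
    strictMonoOn_sigmaOf hα0 hα1.le, tendsto_sigmaOf_nhdsGT_zero hα0 hα1.le,
    tendsto_sigmaOf_nhdsLT_pi_div_two hα0 hα1⟩
end

section
/- Define B_α = 2^α ((α+1)^{1+1/α}/2 − (α+1))^α and C_α = α^α cos^{α+1}(πα/2)/sin^α(πα/2). Then B_α > C_α for every α ∈ (0,1). -/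
/-!
Taking `α`-th roots, `𝓑_α = calBRoot α ^ α` and `𝓒_α = calCRoot α ^ α`, and the line
`2 (1 - α) / 3` separates the two roots on `(0, 1)`.

Below the line: `(1 + α) ^ (1 + 1/α) = (1 + α)² (1 + α) ^ ((1 - α)/α)`, and
`log (1 + α) ≥ 2α / (2 + α)` gives `(1 + α) ^ ((1 - α)/α) ≥ eˣ` with `x = 2 (1 - α) / (2 + α) ∈ [0, 1]`.
In the variable `x` the bound becomes `8 (2 + x) ≤ (4 - x)² eˣ`, which the degree-four Taylor
polynomial of `exp` already satisfies.

Above the line, with `t = π α / 2`: for `α ≤ 3/4` combine `t cot t ≤ 1 - t²/3` with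
`cos t ≤ exp (-t²/2)`, so that `calCRoot α ≤ (2/π) (1 - t²/3) exp (-π² α / 8)`; for `α ≥ 3/4` use
`calCRoot α ≤ cos² t ≤ (π (1 - α) / 2)²`.
-/

open Real

namespace Real

theorem sq_sub_pow_four_div_three_le_sin_sq (x : ℝ) : x ^ 2 - x ^ 4 / 3 ≤ sin x ^ 2 := by
  rcases le_total (x ^ 2) 3 with hx | hx
  · have hs : |x| - |x| ^ 3 / 6 ≤ sin |x| := sin_ge_sub_cube (abs_nonneg x)
    have h0 : 0 ≤ |x| - |x| ^ 3 / 6 := by nlinarith [sq_abs x, abs_nonneg x]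
    have habs : sin |x| ^ 2 = sin x ^ 2 := by
      rcases abs_choice x with h | h <;> simp [h]
    rw [← habs, ← sq_abs x, ← (by decide : Even 4).pow_abs]
    nlinarith [pow_le_pow_left₀ h0 hs 2, pow_nonneg (abs_nonneg x) 6]
  · nlinarith [sq_nonneg (sin x)]

theorem cos_le_one_sub_sq_div_two_add_pow_four_div_24 (x : ℝ) :
    cos x ≤ 1 - x ^ 2 / 2 + x ^ 4 / 24 := by
  have h := sq_sub_pow_four_div_three_le_sin_sq (x / 2)
  have hcos : cos x = 1 - 2 * sin (x / 2) ^ 2 := by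
    rw [← cos_two_mul_eq_one_sub, mul_div_cancel₀ x two_ne_zero]
  rw [hcos]
  nlinarith

theorem mul_cos_le_one_sub_sq_div_three_mul_sin {x : ℝ} (hx : 0 ≤ x) (hx3 : x ^ 2 ≤ 3) :
    x * cos x ≤ (1 - x ^ 2 / 3) * sin x := by
  have hs := mul_le_mul_of_nonneg_left (sin_ge_sub_cube hx) (by linarith : 0 ≤ 1 - x ^ 2 / 3)
  have hc := mul_le_mul_of_nonneg_left (cos_le_one_sub_sq_div_two_add_pow_four_div_24 x) hx
  nlinarith [pow_nonneg hx 5]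

theorem cos_le_exp_neg_sq_div_two {x : ℝ} (hx : |x| ≤ π / 2) : cos x ≤ exp (-(x ^ 2 / 2)) := by
  set f : ℝ → ℝ := fun y ↦ cos y * exp (y ^ 2 / 2)
  have hf : ∀ y, HasDerivAt f ((y * cos y - sin y) * exp (y ^ 2 / 2)) y := by
    intro y
    have hsq : HasDerivAt (fun y : ℝ ↦ y ^ 2 / 2) y y := by
      simpa using (hasDerivAt_pow 2 y).div_const 2
    exact ((hasDerivAt_cos y).mul hsq.exp).congr_deriv (by ring)
  have hanti : AntitoneOn f (Set.Icc 0 (π / 2)) := by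
    refine antitoneOn_of_deriv_nonpos (convex_Icc _ _)
      (fun y _ ↦ (hf y).continuousAt.continuousWithinAt)
      (fun y _ ↦ (hf y).differentiableAt.differentiableWithinAt) ?_
    rw [interior_Icc]
    rintro y ⟨hy0, hy1⟩
    rw [(hf y).deriv]
    have hc : 0 < cos y := cos_pos_of_mem_Ioo ⟨by linarith, hy1⟩
    have := le_tan hy0.le hy1
    rw [tan_eq_sin_div_cos, le_div_iff₀ hc] at this
    exact mul_nonpos_of_nonpos_of_nonneg (by linarith) (exp_pos _).le
  have h := hanti ⟨le_refl 0, by positivity⟩ ⟨abs_nonneg x, hx⟩ (abs_nonneg x)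
  simp only [f, cos_abs, sq_abs, cos_zero, one_mul, ne_eq, OfNat.ofNat_ne_zero,
    not_false_eq_true, zero_pow, zero_div, exp_zero] at h
  calc cos x = cos x * exp (x ^ 2 / 2) * exp (-(x ^ 2 / 2)) := by
        rw [mul_assoc, ← exp_add, add_neg_cancel, exp_zero, mul_one]
    _ ≤ exp (-(x ^ 2 / 2)) := by nlinarith [exp_pos (-(x ^ 2 / 2))]

theorem eight_mul_two_add_le_sq_four_sub_mul_exp {x : ℝ} (h0 : 0 ≤ x) (h1 : x ≤ 1) :
    8 * (2 + x) ≤ (4 - x) ^ 2 * exp x := by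
  have hexp := sum_le_exp_of_nonneg h0 5
  simp only [Finset.sum_range_succ, Finset.sum_range_zero, Nat.factorial] at hexp
  norm_num at hexp
  nlinarith [mul_le_mul_of_nonneg_left hexp (sq_nonneg (4 - x)), mul_nonneg h0 h0,
    mul_nonneg (mul_nonneg h0 h0) (sub_nonneg.2 h1), pow_nonneg h0 3, pow_nonneg h0 4]

theorem cos_pi_mul_div_two_nonneg {α : ℝ} (h0 : -1 ≤ α) (h1 : α ≤ 1) : 0 ≤ cos (π * α / 2) :=
  cos_nonneg_of_mem_Icc ⟨by nlinarith [pi_pos], by nlinarith [pi_pos]⟩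

theorem sin_pi_mul_div_two_nonneg {α : ℝ} (h0 : 0 ≤ α) (h1 : α ≤ 2) : 0 ≤ sin (π * α / 2) :=
  sin_nonneg_of_nonneg_of_le_pi (by positivity) (by nlinarith [pi_pos])

theorem sq_pi_mul_div_two_le_three {α : ℝ} (h0 : 0 ≤ α) (h1 : α ≤ 1) :
    (π * α / 2) ^ 2 ≤ 3 := by
  have : π * α / 2 ≤ 1.6 := by nlinarith [pi_pos, pi_lt_d2]
  nlinarith [pow_le_pow_left₀ (by positivity) this 2]

end Real

noncomputable def calBRoot (α : ℝ) : ℝ := (α + 1) ^ (1 + 1 / α) - 2 * (α + 1)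

noncomputable def calCRoot (α : ℝ) : ℝ :=
  α * cos (π * α / 2) ^ ((α + 1) / α) / sin (π * α / 2)

section

variable {α : ℝ}

theorem two_mul_one_sub_div_three_le_calBRoot (h0 : 0 < α) (h1 : α ≤ 1) :
    2 * (1 - α) / 3 ≤ calBRoot α := by
  set x := 2 * (1 - α) / (2 + α) with hx
  have hx0 : 0 ≤ x := div_nonneg (by linarith) (by linarith)
  have hx1 : x ≤ 1 := by rw [hx, div_le_one (by linarith)]; linarith
  have hsplit : (α + 1) ^ (1 + 1 / α) = (α + 1) ^ 2 * (α + 1) ^ ((1 - α) / α) := by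
    rw [show 1 + 1 / α = (2 : ℕ) + (1 - α) / α by field_simp; ring,
      rpow_add (by linarith), rpow_natCast]
  have hexp : exp x ≤ (α + 1) ^ ((1 - α) / α) := by
    rw [rpow_def_of_pos (by linarith), add_comm α 1]
    gcongr
    calc x = 2 * α / (α + 2) * ((1 - α) / α) := by rw [hx]; field_simp; ring
      _ ≤ log (1 + α) * ((1 - α) / α) :=
        mul_le_mul_of_nonneg_right (le_log_one_add_of_nonneg h0.le)
          (div_nonneg (by linarith) h0.le)
  have hkey : 4 * (2 + α) ≤ 3 * ((α + 1) ^ 2 * exp x) := by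
    have hα2 : 0 < 2 + α := by linarith
    have e : (4 - x) ^ 2 * exp x - 8 * (2 + x)
        = 12 / (2 + α) ^ 2 * (3 * ((α + 1) ^ 2 * exp x) - 4 * (2 + α)) := by
      rw [hx]; field_simp; ring
    have := (mul_nonneg_iff_of_pos_left (by positivity)).1
      (e ▸ sub_nonneg.2 (eight_mul_two_add_le_sq_four_sub_mul_exp hx0 hx1))
    linarith
  unfold calBRoot
  rw [hsplit]
  nlinarith [mul_le_mul_of_nonneg_left hexp (sq_nonneg (α + 1))]

theorem calCRoot_nonneg (h0 : 0 ≤ α) (h1 : α ≤ 1) : 0 ≤ calCRoot α :=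
  div_nonneg (mul_nonneg h0 (rpow_nonneg (cos_pi_mul_div_two_nonneg (by linarith) h1) _))
    (sin_pi_mul_div_two_nonneg h0 (by linarith))

theorem calCRoot_le_cos_sq (h0 : 0 < α) (h1 : α ≤ 1) :
    calCRoot α ≤ cos (π * α / 2) ^ 2 := by
  have hc0 := cos_pi_mul_div_two_nonneg (by linarith) h1
  have hsin : α ≤ sin (π * α / 2) := by
    simpa only [div_mul_eq_mul_div] using le_sin_mul h0.le h1
  have hpow : cos (π * α / 2) ^ ((α + 1) / α) ≤ cos (π * α / 2) ^ 2 := by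
    rw [← rpow_natCast]
    refine rpow_le_rpow_of_exponent_ge' hc0 (cos_le_one _) (by norm_num) ?_
    rw [le_div_iff₀ h0]; push_cast; linarith
  unfold calCRoot
  rw [div_le_iff₀ (h0.trans_le hsin)]
  calc α * cos (π * α / 2) ^ ((α + 1) / α) ≤ sin (π * α / 2) * cos (π * α / 2) ^ 2 :=
        mul_le_mul hsin hpow (by positivity) (h0.le.trans hsin)
    _ = cos (π * α / 2) ^ 2 * sin (π * α / 2) := mul_comm _ _

theorem calCRoot_lt_of_three_quarters_le (h0 : 3 / 4 ≤ α) (h1 : α < 1) :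
    calCRoot α < 2 * (1 - α) / 3 := by
  have hcos : cos (π * α / 2) ≤ π * (1 - α) / 2 := by
    rw [← sin_pi_div_two_sub]
    exact (sin_le (by nlinarith [pi_pos])).trans_eq (by ring)
  have hcos0 := cos_pi_mul_div_two_nonneg (by linarith) h1.le
  calc calCRoot α ≤ cos (π * α / 2) ^ 2 := calCRoot_le_cos_sq (by linarith) h1.le
    _ ≤ (π * (1 - α) / 2) ^ 2 := by gcongr
    _ < 2 * (1 - α) / 3 := by
      have hε : 0 < 1 - α := by linarith
      have hπ : π ^ 2 * (1 - α) < 8 / 3 := by nlinarith [pi_pos, pi_lt_d2]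
      nlinarith [mul_lt_mul_of_pos_right hπ hε]

theorem mul_cos_div_sin_le (h0 : 0 < α) (h1 : α ≤ 1) :
    α * cos (π * α / 2) / sin (π * α / 2) ≤ 2 / π * (1 - (π * α / 2) ^ 2 / 3) := by
  have hs : 0 < sin (π * α / 2) := sin_pos_of_pos_of_lt_pi (by positivity) (by nlinarith [pi_pos])
  have ht := mul_cos_le_one_sub_sq_div_three_mul_sin (x := π * α / 2) (by positivity)
    (sq_pi_mul_div_two_le_three h0.le h1)
  rw [div_le_iff₀ hs]
  calc α * cos (π * α / 2) = 2 / π * (π * α / 2 * cos (π * α / 2)) := by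
        field_simp
    _ ≤ 2 / π * ((1 - (π * α / 2) ^ 2 / 3) * sin (π * α / 2)) := by gcongr
    _ = _ := by ring

theorem cos_pi_mul_div_two_rpow_inv_le (h0 : 0 < α) (h1 : α ≤ 1) :
    cos (π * α / 2) ^ (1 / α) ≤ exp (-(π ^ 2 * α / 8)) := by
  have hcos := cos_le_exp_neg_sq_div_two (x := π * α / 2)
    (by rw [abs_of_nonneg (by positivity)]; nlinarith [pi_pos])
  have hc0 := cos_pi_mul_div_two_nonneg (by linarith) h1
  calc cos (π * α / 2) ^ (1 / α) ≤ exp (-((π * α / 2) ^ 2 / 2)) ^ (1 / α) := by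
        gcongr
    _ = exp (-(π ^ 2 * α / 8)) := by
        rw [← exp_mul]
        congr 1
        field_simp
        ring

theorem calCRoot_le (h0 : 0 < α) (h1 : α < 1) :
    calCRoot α ≤ 2 / π * (1 - (π * α / 2) ^ 2 / 3) * exp (-(π ^ 2 * α / 8)) := by
  have hc : 0 < cos (π * α / 2) :=
    cos_pos_of_mem_Ioo ⟨by nlinarith [pi_pos], by nlinarith [pi_pos]⟩
  have hsplit : cos (π * α / 2) ^ ((α + 1) / α)
      = cos (π * α / 2) * cos (π * α / 2) ^ (1 / α) := by
    rw [add_div, div_self h0.ne', rpow_add hc, rpow_one]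
  have hcs : 0 ≤ α * cos (π * α / 2) / sin (π * α / 2) :=
    div_nonneg (by positivity) (sin_pi_mul_div_two_nonneg h0.le (by linarith))
  calc calCRoot α = α * cos (π * α / 2) / sin (π * α / 2) * cos (π * α / 2) ^ (1 / α) := by
        rw [calCRoot, hsplit]; ring
    _ ≤ _ := mul_le_mul (mul_cos_div_sin_le h0 h1.le) (cos_pi_mul_div_two_rpow_inv_le h0 h1.le)
        (by positivity) (hcs.trans (mul_cos_div_sin_le h0 h1.le))

theorem calCRoot_lt_of_le_three_quarters (h0 : 0 < α) (h1 : α ≤ 3 / 4) :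
    calCRoot α < 2 * (1 - α) / 3 := by
  set y := π ^ 2 * α / 8 with hy
  have hexp : exp (-y) ≤ 1 / (1 + y + y ^ 2 / 2) := by
    rw [exp_neg, ← one_div]
    exact one_div_le_one_div_of_le (by positivity) (quadratic_le_exp_of_nonneg (by positivity))
  have hD : 0 < 1 + y + y ^ 2 / 2 := by positivity
  have hπ : 3.14 ^ 2 ≤ π ^ 2 := by gcongr; exact pi_gt_d2.le
  -- every factor is monotone in `π`, so it suffices to check the inequality at `π = 3.14`
  have hpoly : 3 * (1 - π ^ 2 * α ^ 2 / 12) < π * (1 - α) * (1 + y + y ^ 2 / 2) :=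
    calc 3 * (1 - π ^ 2 * α ^ 2 / 12) ≤ 3 * (1 - 3.14 ^ 2 * α ^ 2 / 12) := by nlinarith
      _ < 3.14 * (1 - α) * (1 + 3.14 ^ 2 * α / 8 + (3.14 ^ 2 * α / 8) ^ 2 / 2) := by
        nlinarith [mul_pos h0 h0, mul_pos (mul_pos h0 h0) h0, sub_nonneg.2 h1]
      _ ≤ π * (1 - α) * (1 + y + y ^ 2 / 2) := by
        have : 0 ≤ 1 - α := by linarith
        rw [hy]; gcongr; exact pi_gt_d2.le
  calc calCRoot α ≤ 2 / π * (1 - (π * α / 2) ^ 2 / 3) * exp (-y) := calCRoot_le h0 (by linarith)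
    _ ≤ 2 / π * (1 - (π * α / 2) ^ 2 / 3) * (1 / (1 + y + y ^ 2 / 2)) := by
        gcongr
        exact mul_nonneg (by positivity)
          (by linarith [sq_pi_mul_div_two_le_three h0.le (by linarith : α ≤ 1)])
    _ = 2 / (3 * π) * (3 * (1 - π ^ 2 * α ^ 2 / 12)) / (1 + y + y ^ 2 / 2) := by
        field_simp; ring
    _ < 2 / (3 * π) * (π * (1 - α) * (1 + y + y ^ 2 / 2)) / (1 + y + y ^ 2 / 2) := by
        gcongr
    _ = 2 * (1 - α) / 3 := by
        rw [mul_div_assoc, mul_div_cancel_right₀ _ hD.ne']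
        field_simp

theorem calCRoot_lt_calBRoot (h0 : 0 < α) (h1 : α < 1) : calCRoot α < calBRoot α := by
  refine lt_of_lt_of_le ?_ (two_mul_one_sub_div_three_le_calBRoot h0 h1.le)
  rcases le_total α (3 / 4) with h | h
  · exact calCRoot_lt_of_le_three_quarters h0 h
  · exact calCRoot_lt_of_three_quarters_le h h1

theorem calCRoot_rpow (h0 : 0 < α) (h1 : α ≤ 1) :
    calCRoot α ^ α = α ^ α * cos (π * α / 2) ^ (α + 1) / sin (π * α / 2) ^ α := by
  have hc := cos_pi_mul_div_two_nonneg (by linarith) h1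
  rw [calCRoot, div_rpow (by positivity) (sin_pi_mul_div_two_nonneg h0.le (by linarith)),
    mul_rpow h0.le (by positivity), ← rpow_mul hc, div_mul_cancel₀ _ h0.ne']

end

theorem calB_gt_calC (α : ℝ) (hα : α ∈ Set.Ioo (0:ℝ) 1) :
    α ^ α * Real.cos (Real.pi*α/2) ^ (α+1) / Real.sin (Real.pi*α/2) ^ α
      < 2 ^ α * ((α+1) ^ (1+ 1/α) / 2 - (α+1)) ^ α := by
  obtain ⟨h0, h1⟩ := hα
  have hC := calCRoot_nonneg h0.le h1.le
  have hlt := calCRoot_lt_calBRoot h0 h1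
  have hB : 2 * ((α + 1) ^ (1 + 1 / α) / 2 - (α + 1)) = calBRoot α := by
    unfold calBRoot; ring
  rw [← calCRoot_rpow h0 h1.le, ← mul_rpow zero_le_two (by linarith), hB]
  exact rpow_lt_rpow hC hlt h0
end

section
/- For α ∈ (0,1), let W(e^{−1}) solve x + 1 + ln x = 0 and set T_α = −ln(2^α − 1). Then for all α ∈ (0,1): T_α ≥ −ln α + ½(α+1)^{(α+1)/α} − (α+1) ≥ −ln(sin(πα/2)) + ½(α+1)^{(α+1)/α} − (α+1). -/
/-!
Let `F x = log x - log (2 ^ x - 1) + (x + 1) - (1 + x) ^ ((1 + x) / x) / 2` be the gap in the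
first inequality. `F`, `F'` and `F''` vanish at `x = 1`, so it suffices that `F''' ≤ 0` on
`(0, 1)`: integrating three times from `1` gives `F ≥ 0`. With `φ u = log u - log (exp u - 1)`
and `ψ = exp ∘ q`, `q x = (1 + 1 / x) * log (1 + x)`, we have
`F''' x = (log 2) ^ 3 * φ''' (x * log 2) - ψ''' x / 2`. Taylor bounds for `exp` give
`φ''' u ≤ u / 30`, and bounding `log (1 + x)` by partial sums of `2 * artanh (x / (2 + x))` gives
`ψ''' ≥ 1 / 50`; since `(log 2) ^ 4 / 30 < 1 / 100` this suffices. Both estimates reduce to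
polynomial inequalities, certified by their Bernstein forms.

The second inequality is Jordan's inequality `α ≤ sin (π * α / 2)`.
-/

open Real Set

namespace TAlpha

theorem le_of_hasDerivAt_nonpos {G G' : ℝ → ℝ} {a b : ℝ} (hab : a ≤ b)
    (hG : ∀ y ∈ Icc a b, HasDerivAt G (G' y) y) (hG' : ∀ y ∈ Ioo a b, G' y ≤ 0) :
    G b ≤ G a :=
  antitoneOn_of_hasDerivWithinAt_nonpos (convex_Icc a b)
    (fun y hy => (hG y hy).continuousAt.continuousWithinAt)
    (fun y hy => (hG y (interior_subset hy)).hasDerivWithinAt)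
    (fun y hy => hG' y (by rwa [interior_Icc] at hy))
    (left_mem_Icc.2 hab) (right_mem_Icc.2 hab) hab

theorem le_of_hasDerivAt_nonneg {G G' : ℝ → ℝ} {a b : ℝ} (hab : a ≤ b)
    (hG : ∀ y ∈ Icc a b, HasDerivAt G (G' y) y) (hG' : ∀ y ∈ Ioo a b, 0 ≤ G' y) :
    G a ≤ G b :=
  monotoneOn_of_hasDerivWithinAt_nonneg (convex_Icc a b)
    (fun y hy => (hG y hy).continuousAt.continuousWithinAt)
    (fun y hy => (hG y (interior_subset hy)).hasDerivWithinAt)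
    (fun y hy => hG' y (by rwa [interior_Icc] at hy))
    (left_mem_Icc.2 hab) (right_mem_Icc.2 hab) hab

noncomputable section

def φ (u : ℝ) : ℝ := log u - log (exp u - 1)
def φ₁ (u : ℝ) : ℝ := 1 / u - exp u / (exp u - 1)
def φ₂ (u : ℝ) : ℝ := -1 / u ^ 2 + exp u / (exp u - 1) ^ 2
def φ₃ (u : ℝ) : ℝ := 2 / u ^ 3 - exp u * (exp u + 1) / (exp u - 1) ^ 3

theorem exp_sub_one_pos {u : ℝ} (hu : 0 < u) : 0 < exp u - 1 :=
  sub_pos.2 (one_lt_exp_iff.2 hu)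

theorem hasDerivAt_φ {u : ℝ} (hu : 0 < u) : HasDerivAt φ (φ₁ u) u :=
  ((hasDerivAt_log hu.ne').sub
    (((hasDerivAt_exp u).sub_const 1).log (exp_sub_one_pos hu).ne')).congr_deriv
    (by rw [φ₁]; ring)

theorem hasDerivAt_φ₁ {u : ℝ} (hu : 0 < u) : HasDerivAt φ₁ (φ₂ u) u := by
  have hE := (exp_sub_one_pos hu).ne'
  have := ((hasDerivAt_id u).inv hu.ne').sub
    ((hasDerivAt_exp u).div ((hasDerivAt_exp u).sub_const 1) hE)
  refine (this.congr_of_eventuallyEq (.of_forall fun v => by simp [φ₁])).congr_deriv ?_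
  simp only [φ₂, id_eq]
  field_simp
  ring

theorem hasDerivAt_φ₂ {u : ℝ} (hu : 0 < u) : HasDerivAt φ₂ (φ₃ u) u := by
  have hE := (exp_sub_one_pos hu).ne'
  have := ((hasDerivAt_pow 2 u).inv (pow_ne_zero 2 hu.ne')).neg.add
    ((hasDerivAt_exp u).div (((hasDerivAt_exp u).sub_const 1).pow 2) (pow_ne_zero 2 hE))
  refine (this.congr_of_eventuallyEq
    (.of_forall fun v => by simp [φ₂, neg_div])).congr_deriv ?_
  simp only [φ₃, Pi.pow_apply]
  field_simp
  ring

def expPoly (u : ℝ) : ℝ := u + u ^ 2 / 2 + u ^ 3 / 6 + u ^ 4 / 24 + u ^ 5 / 120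

theorem expPoly_le_exp_sub_one {u : ℝ} (hu : 0 ≤ u) : expPoly u ≤ exp u - 1 := by
  have := sum_le_exp_of_nonneg hu 6
  simp only [Finset.sum_range_succ, Finset.sum_range_zero, Nat.factorial] at this
  norm_num at this
  rw [expPoly]
  linarith

theorem exp_sub_one_le_expPoly_add {u : ℝ} (h0 : 0 ≤ u) (h1 : u ≤ 1) :
    exp u - 1 ≤ expPoly u + 7 * u ^ 6 / 4320 := by
  have := (abs_le.1 (exp_bound (n := 6) (by rwa [abs_of_nonneg h0]) (by norm_num))).2
  simp only [abs_of_nonneg h0, Finset.sum_range_succ, Finset.sum_range_zero,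
    Nat.factorial] at this
  norm_num at this
  rw [expPoly]
  linarith

theorem two_mul_cube_sub_le_of_expPoly {u : ℝ} (h0 : 0 ≤ u) (h1 : u ≤ 7 / 10) :
    2 * (expPoly u + 7 * u ^ 6 / 4320) ^ 3 - u ^ 3 * ((1 + expPoly u) * (2 + expPoly u))
      ≤ u ^ 7 / 30 := by
  have h1' : 0 ≤ 7 / 10 - u := by linarith
  rw [← sub_nonneg]
  -- Bernstein form on `[0, 7 / 10]`: every coefficient is positive.
  have : u ^ 7 / 30 - (2 * (expPoly u + 7 * u ^ 6 / 4320) ^ 3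
      - u ^ 3 * ((1 + expPoly u) * (2 + expPoly u))) =
      u ^ 7 * ((2500000000/1977326743)*(7/10-u)^11 + (238750000000/17795940687)*u*(7/10-u)^10 +
      (3431318750000/53387822061)*u^2*(7/10-u)^9 + (9780615625000/53387822061)*u^3*(7/10-u)^8 +
      (18390154043750/53387822061)*u^4*(7/10-u)^7 + (40931272639375/91521980676)*u^5*(7/10-u)^6 +
      (447314001167875/1098263768112)*u^6*(7/10-u)^5 +
      (3972805164982625/15375692753568)*u^7*(7/10-u)^4 +
      (20410667177936617/184508313042816)*u^8*(7/10-u)^3 +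
      (219969087207891361/7380332521712640)*u^9*(7/10-u)^2 +
      (320659739844999619/73803325217126400)*u^10*(7/10-u) +
      (18081920050576360871/79707591234496512000)*u^11) := by
    rw [expPoly]
    ring
  rw [this]
  positivity

theorem φ₃_le {u : ℝ} (h0 : 0 < u) (h1 : u ≤ 7 / 10) : φ₃ u ≤ u / 30 := by
  have hE := exp_sub_one_pos h0
  have lower := expPoly_le_exp_sub_one h0.le
  have upper := exp_sub_one_le_expPoly_add h0.le (by linarith)
  have hP : 0 ≤ expPoly u := by rw [expPoly]; positivity
  have hu : u ≤ exp u - 1 := by linarith [add_one_le_exp u]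
  have hcube : (exp u - 1) ^ 3 ≤ (expPoly u + 7 * u ^ 6 / 4320) ^ 3 := by gcongr
  have hprod : u ^ 3 * ((1 + expPoly u) * (2 + expPoly u)) ≤ u ^ 3 * (exp u * (exp u + 1)) := by
    gcongr u ^ 3 * ?_
    exact mul_le_mul (by linarith) (by linarith) (by positivity) (by linarith)
  have hu7 : u ^ 7 ≤ u * (u ^ 3 * (exp u - 1) ^ 3) := by
    rw [show u ^ 7 = u * (u ^ 3 * u ^ 3) by ring]
    gcongr
  have hφ₃ : φ₃ u = (2 * (exp u - 1) ^ 3 - u ^ 3 * (exp u * (exp u + 1)))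
      / (u ^ 3 * (exp u - 1) ^ 3) := by
    rw [φ₃]
    field_simp
  rw [hφ₃, div_le_iff₀ (by positivity)]
  linarith [two_mul_cube_sub_le_of_expPoly h0.le h1]

def q (x : ℝ) : ℝ := (1 + 1 / x) * log (1 + x)
def q₁ (x : ℝ) : ℝ := 1 / x - log (1 + x) / x ^ 2
def q₂ (x : ℝ) : ℝ := 2 * log (1 + x) / x ^ 3 - 1 / x ^ 2 - 1 / (x ^ 2 * (1 + x))
def q₃ (x : ℝ) : ℝ :=
  -6 * log (1 + x) / x ^ 4 + 2 / (x ^ 3 * (1 + x)) + 2 / x ^ 3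
    + (2 + 3 * x) / (x ^ 3 * (1 + x) ^ 2)

theorem hasDerivAt_log_one_add {x : ℝ} (hx : 0 < 1 + x) :
    HasDerivAt (fun y => log (1 + y)) (1 / (1 + x)) x :=
  (((hasDerivAt_id x).const_add 1).log hx.ne').congr_deriv (by simp)

theorem hasDerivAt_q {x : ℝ} (hx : 0 < x) : HasDerivAt q (q₁ x) x := by
  have := (((hasDerivAt_id x).inv hx.ne').const_add 1).mul
    (hasDerivAt_log_one_add (by linarith))
  refine (this.congr_of_eventuallyEq (.of_forall fun v => by simp [q])).congr_deriv ?_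
  simp only [q₁, id_eq, Pi.inv_apply]
  field_simp
  ring

theorem hasDerivAt_q₁ {x : ℝ} (hx : 0 < x) : HasDerivAt q₁ (q₂ x) x := by
  have h1x : 1 + x ≠ 0 := by positivity
  have := ((hasDerivAt_id x).inv hx.ne').sub
    ((hasDerivAt_log_one_add (by linarith)).div (hasDerivAt_pow 2 x) (pow_ne_zero 2 hx.ne'))
  refine (this.congr_of_eventuallyEq (.of_forall fun v => by simp [q₁])).congr_deriv ?_
  simp only [q₂, id_eq]
  field_simp
  ring

theorem hasDerivAt_q₂ {x : ℝ} (hx : 0 < x) : HasDerivAt q₂ (q₃ x) x := by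
  have h1x : 1 + x ≠ 0 := by positivity
  have := ((((hasDerivAt_log_one_add (by linarith)).const_mul 2).div (hasDerivAt_pow 3 x)
    (pow_ne_zero 3 hx.ne')).sub ((hasDerivAt_pow 2 x).inv (pow_ne_zero 2 hx.ne'))).sub
    (((hasDerivAt_pow 2 x).mul ((hasDerivAt_id x).const_add 1)).inv
      (mul_ne_zero (pow_ne_zero 2 hx.ne') h1x))
  refine (this.congr_of_eventuallyEq (.of_forall fun v => by simp [q₂])).congr_deriv ?_
  simp only [q₃, id_eq, Pi.mul_apply]
  field_simp
  ring

theorem one_le_q {x : ℝ} (hx : 0 < x) : 1 ≤ q x :=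
  calc (1 : ℝ) ≤ 2 * (1 + x) / (2 + x) := by rw [le_div_iff₀ (by linarith)]; linarith
    _ = (1 + 1 / x) * (2 * x / (x + 2)) := by field_simp; ring
    _ ≤ q x := by rw [q]; gcongr; exact le_log_one_add_of_nonneg hx.le

-- `log (1 + x) = 2 * artanh (x / (2 + x))`, and this is the partial sum of the series of
-- `2 * artanh` up to degree 5.
def artanhPoly (t : ℝ) : ℝ := 2 * (t + t ^ 3 / 3 + t ^ 5 / 5)

theorem log_one_add_eq_log_div {x : ℝ} (hx : 0 ≤ x) :
    log (1 + x) = 2 * (1 / 2 * log ((1 + x / (2 + x)) / (1 - x / (2 + x)))) := by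
  rw [show (1 + x / (2 + x)) / (1 - x / (2 + x)) = 1 + x by field_simp; ring]
  ring

theorem artanhPoly_le_log_one_add {x : ℝ} (hx : 0 ≤ x) :
    artanhPoly (x / (2 + x)) ≤ log (1 + x) := by
  have := sum_range_le_log_div (x := x / (2 + x)) (by positivity)
    (by rw [div_lt_one (by linarith)]; linarith) 3
  simp only [Finset.sum_range_succ, Finset.sum_range_zero] at this
  norm_num at this
  rw [log_one_add_eq_log_div hx, artanhPoly]
  linarith

theorem log_one_add_le_artanhPoly_add {x : ℝ} (h0 : 0 ≤ x) (h1 : x ≤ 1) :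
    log (1 + x) ≤ artanhPoly (x / (2 + x)) + (x / (2 + x)) ^ 7 := by
  set t := x / (2 + x) with ht
  have ht0 : 0 ≤ t := by positivity
  have ht1 : t ≤ 1 / 3 := by rw [ht, div_le_iff₀ (by linarith)]; linarith
  have := log_div_le_sum_range_add ht0 (by linarith) 4
  simp only [Finset.sum_range_succ, Finset.sum_range_zero] at this
  norm_num at this
  have tail : t ^ 9 / (1 - t ^ 2) ≤ t ^ 7 / 8 := by
    rw [div_le_iff₀ (by nlinarith)]
    have : 0 ≤ 1 - 9 * t ^ 2 := by nlinarith
    nlinarith [mul_nonneg (pow_nonneg ht0 7) this]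
  rw [log_one_add_eq_log_div h0, artanhPoly]
  nlinarith [pow_nonneg ht0 7]

theorem two_mul_artanhPoly_le {x : ℝ} (hx : 0 ≤ x) :
    2 * artanhPoly (x / (2 + x)) ≤ x + x / (1 + x) := by
  have key : x + x / (1 + x) - 2 * artanhPoly (x / (2 + x))
      = (160 * x ^ 3 + 320 * x ^ 4 + 248 * x ^ 5 + 88 * x ^ 6 + 15 * x ^ 7)
        / (15 * (1 + x) * (2 + x) ^ 5) := by
    rw [artanhPoly]
    field_simp
    ring
  have : 0 ≤ x + x / (1 + x) - 2 * artanhPoly (x / (2 + x)) := by rw [key]; positivity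
  linarith

theorem one_div_hundred_le_q_jet {x : ℝ} (hx0 : 0 < x) (hx1 : x < 1) :
    1 / 100 ≤ q₁ x ^ 3 + 3 * q₁ x * q₂ x + q₃ x := by
  have hL := artanhPoly_le_log_one_add hx0.le
  have hU := log_one_add_le_artanhPoly_add hx0.le hx1.le
  set t := x / (2 + x) with ht
  set L := artanhPoly t with hLdef
  have hlx : log (1 + x) ≤ x := by linarith [log_le_sub_one_of_pos (show 0 < 1 + x by linarith)]
  set B := (2 * L - x - x / (1 + x)) / x ^ 3 with hB
  set R := 2 / (x ^ 3 * (1 + x)) + 2 / x ^ 3 + (2 + 3 * x) / (x ^ 3 * (1 + x) ^ 2) with hR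
  have e₁ : q₁ x = (x - log (1 + x)) / x ^ 2 := by rw [q₁]; field_simp
  have e₂ : q₂ x = (2 * log (1 + x) - x - x / (1 + x)) / x ^ 3 := by rw [q₂]; field_simp
  have e₃ : q₃ x = R - 6 * log (1 + x) / x ^ 4 := by rw [q₃, hR]; ring
  have hB_nonpos : B ≤ 0 :=
    div_nonpos_of_nonpos_of_nonneg (by linarith [two_mul_artanhPoly_le hx0.le]) (by positivity)
  have hq₁ : 0 ≤ q₁ x := by rw [e₁]; exact div_nonneg (by linarith) (by positivity)
  have hq₁q₂ : (x - L) / x ^ 2 * B ≤ q₁ x * q₂ x :=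
    calc (x - L) / x ^ 2 * B ≤ q₁ x * B :=
          mul_le_mul_of_nonpos_right (by rw [e₁]; gcongr) hB_nonpos
      _ ≤ q₁ x * q₂ x := mul_le_mul_of_nonneg_left (by rw [e₂, hB]; gcongr) hq₁
  have hq₁_cube : ((x - (L + t ^ 7)) / x ^ 2) ^ 3 ≤ q₁ x ^ 3 := by
    rw [Odd.pow_le_pow (by decide), e₁]
    gcongr
  have hq₃ : R - 6 * (L + t ^ 7) / x ^ 4 ≤ q₃ x := by
    rw [e₃]
    gcongr
  have h1x : 0 ≤ 1 - x := by linarith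
  -- Bernstein form on `[0, 1]`: every coefficient is positive.
  have key : ((x - (L + t ^ 7)) / x ^ 2) ^ 3 + 3 * ((x - L) / x ^ 2 * B)
      + (R - 6 * (L + t ^ 7) / x ^ 4) - 1 / 100 =
      (3255828480*(1-x)^23 + 105201008640*x*(1-x)^22 + 1623431577600*x^2*(1-x)^21 +
        15917221806080*x^3*(1-x)^20 + 111275220992000*x^4*(1-x)^19 +
        590022718668800*x^5*(1-x)^18 + 2464262227640320*x^6*(1-x)^17 +
        8310215346319360*x^7*(1-x)^16 + 23011267331031040*x^8*(1-x)^15 +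
        52921467728528384*x^9*(1-x)^14 + 101844006745139456*x^10*(1-x)^13 +
        164718742523906432*x^11*(1-x)^12 + 224273362073137344*x^12*(1-x)^11 +
        256843080708022944*x^13*(1-x)^10 + 246560596612419600*x^14*(1-x)^9 +
        197157073948117380*x^15*(1-x)^8 + 130048329049947900*x^16*(1-x)^7 +
        69763621993065540*x^17*(1-x)^6 + 29819403362732220*x^18*(1-x)^5 +
        9856712184146496*x^19*(1-x)^4 + 2407591259594334*x^20*(1-x)^3 +
        403409134410183*x^21*(1-x)^2 + 40371524133336*x^22*(1-x) + 1723386173256*x^23)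
        / (13500 * (1 + x) ^ 2 * (2 + x) ^ 21) := by
    simp only [hLdef, ht, hB, hR, artanhPoly]
    field_simp
    ring
  have : 0 ≤ ((x - (L + t ^ 7)) / x ^ 2) ^ 3 + 3 * ((x - L) / x ^ 2 * B)
      + (R - 6 * (L + t ^ 7) / x ^ 4) - 1 / 100 := by
    rw [key]
    positivity
  linarith

def ψ (x : ℝ) : ℝ := exp (q x)
def ψ₁ (x : ℝ) : ℝ := exp (q x) * q₁ x
def ψ₂ (x : ℝ) : ℝ := exp (q x) * (q₁ x ^ 2 + q₂ x)
def ψ₃ (x : ℝ) : ℝ := exp (q x) * (q₁ x ^ 3 + 3 * q₁ x * q₂ x + q₃ x)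

theorem hasDerivAt_ψ {x : ℝ} (hx : 0 < x) : HasDerivAt ψ (ψ₁ x) x :=
  (hasDerivAt_q hx).exp

theorem hasDerivAt_ψ₁ {x : ℝ} (hx : 0 < x) : HasDerivAt ψ₁ (ψ₂ x) x :=
  ((hasDerivAt_q hx).exp.mul (hasDerivAt_q₁ hx)).congr_deriv (by rw [ψ₂]; ring)

theorem hasDerivAt_ψ₂ {x : ℝ} (hx : 0 < x) : HasDerivAt ψ₂ (ψ₃ x) x :=
  ((hasDerivAt_q hx).exp.mul (((hasDerivAt_q₁ hx).pow 2).add (hasDerivAt_q₂ hx))).congr_deriv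
    (by simp only [ψ₃, Pi.add_apply, Pi.pow_apply]; push_cast; ring)

theorem one_div_fifty_le_ψ₃ {x : ℝ} (hx0 : 0 < x) (hx1 : x < 1) : 1 / 50 ≤ ψ₃ x := by
  have h2 : 2 ≤ exp (q x) := by linarith [add_one_le_exp 1, exp_le_exp.2 (one_le_q hx0)]
  have := mul_le_mul h2 (one_div_hundred_le_q_jet hx0 hx1) (by norm_num) (by positivity)
  rw [ψ₃]
  linarith

def F (x : ℝ) : ℝ := φ (log 2 * x) - log (log 2) + (x + 1) - ψ x / 2
def F₁ (x : ℝ) : ℝ := log 2 * φ₁ (log 2 * x) + 1 - ψ₁ x / 2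
def F₂ (x : ℝ) : ℝ := log 2 ^ 2 * φ₂ (log 2 * x) - ψ₂ x / 2
def F₃ (x : ℝ) : ℝ := log 2 ^ 3 * φ₃ (log 2 * x) - ψ₃ x / 2

theorem hasDerivAt_F {x : ℝ} (hx : 0 < x) : HasDerivAt F (F₁ x) x := by
  have hcx : 0 < log 2 * x := mul_pos (log_pos one_lt_two) hx
  have := ((((hasDerivAt_φ hcx).comp x ((hasDerivAt_id x).const_mul (log 2))).sub_const
    (log (log 2))).add ((hasDerivAt_id x).add_const 1)).sub ((hasDerivAt_ψ hx).div_const 2)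
  refine (this.congr_of_eventuallyEq (.of_forall fun v => by simp [F])).congr_deriv ?_
  rw [F₁]
  ring

theorem hasDerivAt_F₁ {x : ℝ} (hx : 0 < x) : HasDerivAt F₁ (F₂ x) x := by
  have hcx : 0 < log 2 * x := mul_pos (log_pos one_lt_two) hx
  have := ((((hasDerivAt_φ₁ hcx).comp x ((hasDerivAt_id x).const_mul (log 2))).const_mul
    (log 2)).add_const 1).sub ((hasDerivAt_ψ₁ hx).div_const 2)
  refine (this.congr_of_eventuallyEq (.of_forall fun v => by simp [F₁])).congr_deriv ?_
  rw [F₂]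
  ring

theorem hasDerivAt_F₂ {x : ℝ} (hx : 0 < x) : HasDerivAt F₂ (F₃ x) x := by
  have hcx : 0 < log 2 * x := mul_pos (log_pos one_lt_two) hx
  have := (((hasDerivAt_φ₂ hcx).comp x ((hasDerivAt_id x).const_mul (log 2))).const_mul
    (log 2 ^ 2)).sub ((hasDerivAt_ψ₂ hx).div_const 2)
  refine (this.congr_of_eventuallyEq (.of_forall fun v => by simp [F₂])).congr_deriv ?_
  rw [F₃]
  ring

theorem exp_q_one : exp (q 1) = 4 := by
  rw [q, show (1 + 1 / 1 : ℝ) * log (1 + 1) = log 2 * 2 by norm_num; ring, exp_mul,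
    exp_log two_pos]
  norm_num

theorem F_one : F 1 = 0 := by
  simp only [F, φ, ψ, mul_one, exp_log two_pos, exp_q_one]
  norm_num

theorem F₁_one : F₁ 1 = 0 := by
  have := log_pos one_lt_two
  simp only [F₁, φ₁, ψ₁, q₁, mul_one, exp_log two_pos, exp_q_one]
  field_simp
  norm_num
  ring

theorem F₂_one : F₂ 1 = 0 := by
  have := log_pos one_lt_two
  simp only [F₂, φ₂, ψ₂, q₁, q₂, mul_one, exp_log two_pos, exp_q_one]
  field_simp
  norm_num
  ring

theorem F₃_nonpos {x : ℝ} (hx0 : 0 < x) (hx1 : x < 1) : F₃ x ≤ 0 := by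
  have hc0 : 0 < log 2 := log_pos one_lt_two
  have hc1 : log 2 < 7 / 10 := by linarith [log_two_lt_d9]
  have hφ : log 2 ^ 3 * φ₃ (log 2 * x) ≤ log 2 ^ 3 * (log 2 * x / 30) := by
    gcongr
    exact φ₃_le (mul_pos hc0 hx0) (by nlinarith)
  have hc4 : log 2 ^ 4 * x ≤ (7 / 10) ^ 4 :=
    calc log 2 ^ 4 * x ≤ log 2 ^ 4 * 1 := by gcongr
      _ ≤ (7 / 10) ^ 4 := by rw [mul_one]; gcongr
  rw [F₃]
  nlinarith [one_div_fifty_le_ψ₃ hx0 hx1]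

theorem F₂_nonneg {x : ℝ} (hx0 : 0 < x) (hx1 : x < 1) : 0 ≤ F₂ x :=
  F₂_one ▸ le_of_hasDerivAt_nonpos hx1.le (fun _ hy => hasDerivAt_F₂ (hx0.trans_le hy.1))
    (fun _ hy => F₃_nonpos (hx0.trans hy.1) hy.2)

theorem F₁_nonpos {x : ℝ} (hx0 : 0 < x) (hx1 : x < 1) : F₁ x ≤ 0 :=
  F₁_one ▸ le_of_hasDerivAt_nonneg hx1.le (fun _ hy => hasDerivAt_F₁ (hx0.trans_le hy.1))
    (fun _ hy => F₂_nonneg (hx0.trans hy.1) hy.2)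

theorem F_nonneg {x : ℝ} (hx0 : 0 < x) (hx1 : x < 1) : 0 ≤ F x :=
  F_one ▸ le_of_hasDerivAt_nonpos hx1.le (fun _ hy => hasDerivAt_F (hx0.trans_le hy.1))
    (fun _ hy => F₁_nonpos (hx0.trans hy.1) hy.2)

theorem F_eq {x : ℝ} (hx : 0 < x) :
    F x = log x - log (2 ^ x - 1) + (x + 1) - (x + 1) ^ ((x + 1) / x) / 2 := by
  have hq : q x = log (x + 1) * ((x + 1) / x) := by rw [q, add_comm 1 x]; field_simp
  rw [F, φ, ψ, hq, ← rpow_def_of_pos two_pos, ← rpow_def_of_pos (by linarith : 0 < x + 1),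
    log_mul (log_pos one_lt_two).ne' hx.ne']
  ring

end

theorem le_sin_pi_mul_div_two {x : ℝ} (h0 : 0 ≤ x) (h1 : x ≤ 1) : x ≤ sin (π * x / 2) := by
  have := mul_le_sin (x := π * x / 2) (by positivity) (by nlinarith [pi_pos])
  rwa [show 2 / π * (π * x / 2) = x by field_simp] at this

end TAlpha

theorem T_alpha_inequalities (α : ℝ) (hα : α ∈ Set.Ioo (0:ℝ) 1) :
    -Real.log (2 ^ α - 1)
        ≥ -Real.log α + (1/2) * (α+1) ^ ((α+1)/α) - (α+1) ∧
      -Real.log α + (1/2) * (α+1) ^ ((α+1)/α) - (α+1)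
        ≥ -Real.log (Real.sin (Real.pi*α/2)) + (1/2) * (α+1) ^ ((α+1)/α) - (α+1) := by
  obtain ⟨h0, h1⟩ := hα
  constructor
  · have := TAlpha.F_eq h0 ▸ TAlpha.F_nonneg h0 h1
    linarith
  · have := log_le_log h0 (TAlpha.le_sin_pi_mul_div_two h0.le h1.le)
    linarith
end
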